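/- arXiv:1410.7864 — 7 statements merged into one kernel-verified Lean document; each statement's English description precedes it below -/
import Mathlib

section
/- Let V be a finite-dimensional real vector space, C ⊆ V a linear subspace, and ω a nonzero alternating k-form on V. Then there exist an integer j with 0 ≤ j ≤ dim C and vectors v₁, …, v_j ∈ C such that the iterated interior product ι_{v₁}⋯ι_{v_j}ω is a nonzero alternating (k−j)-form which vanishes whenever at least one of its arguments lies in C. -/
set_option synthInstance.maxHeartbeats 1000000
set_option maxHeartbeats 1000000

private lemma key_cons {n j m : ℕ} (h : n = j + m) (H : n + 1 = (j + 1) + m)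
    {α : Type*} (c : α) (v : Fin j → α) (u : Fin m → α) :
    (Fin.append (Fin.cons c v) u) ∘ Fin.cast H = Fin.cons c ((Fin.append v u) ∘ Fin.cast h) := by
  subst h
  rw [Fin.append_cons]
  have h1 : Fin.cast (rfl : j + m = j + m) = id := by funext i; ext; simp
  have h2 : ∀ i : Fin (j + m + 1),
      Fin.cast (Nat.add_right_comm j 1 m) (Fin.cast H i) = i := by
    intro i; ext; simp
  funext i
  simp only [Function.comp_apply, h2, h1, id_eq]
  rfl

private lemma aux (V : Type*) [AddCommGroup V] [Module ℝ V]
    (C : Submodule ℝ V) :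
    ∀ (k : ℕ) (ω : V [⋀^Fin k]→ₗ[ℝ] ℝ), ω ≠ 0 →
    ∃ (j m : ℕ) (h : k = j + m) (v : Fin j → V),
      (∀ i, v i ∈ C) ∧
      (∃ u : Fin m → V, ω (Fin.append v u ∘ Fin.cast h) ≠ 0) ∧
      (∀ u : Fin m → V, (∃ i, u i ∈ C) → ω (Fin.append v u ∘ Fin.cast h) = 0) := by
  intro k
  induction k with
  | zero =>
    intro ω hω
    refine ⟨0, 0, rfl, Fin.elim0, fun i => i.elim0, ?_, fun u ⟨i, _⟩ => i.elim0⟩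
    obtain ⟨w, hw⟩ : ∃ w, ω w ≠ 0 := by
      by_contra h
      push_neg at h
      exact hω (AlternatingMap.ext h)
    refine ⟨w, ?_⟩
    convert hw using 2
  | succ n ih =>
    intro ω hω
    by_cases hnull : ∀ w : Fin (n + 1) → V, (∃ i, w i ∈ C) → ω w = 0
    · refine ⟨0, n + 1, (Nat.zero_add _).symm, Fin.elim0, fun i => i.elim0, ?_, ?_⟩
      · obtain ⟨w, hw⟩ : ∃ w, ω w ≠ 0 := by
          by_contra h
          push_neg at h
          exact hω (AlternatingMap.ext h)
        refine ⟨w, ?_⟩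
        convert hw using 2
        funext i
        simp [Fin.elim0_append]
      · intro u ⟨i, hi⟩
        apply hnull
        refine ⟨Fin.cast (by omega) i, ?_⟩
        simpa [Fin.elim0_append] using hi
    · push_neg at hnull
      obtain ⟨w, ⟨i₀, hi₀⟩, hw⟩ := hnull
      set σ : Equiv.Perm (Fin (n + 1)) := Equiv.swap 0 i₀ with hσ
      have hw' : ω (w ∘ σ) ≠ 0 := by
        rw [AlternatingMap.map_perm]
        rcases Int.units_eq_one_or (Equiv.Perm.sign σ) with h | h <;>
          simp [h, hw]
      set c : V := (w ∘ σ) 0 with hc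
      have hcC : c ∈ C := by
        simpa [hc, hσ, Equiv.swap_apply_left] using hi₀
      set ω' : V [⋀^Fin n]→ₗ[ℝ] ℝ := ω.curryLeft c with hω'
      have hω'app : ∀ u : Fin n → V, ω' u = ω (Fin.cons c u) := fun u => rfl
      have hω'ne : ω' ≠ 0 := by
        intro h
        apply hw'
        have : ω' (Fin.tail (w ∘ σ)) = 0 := by rw [h]; rfl
        rwa [hω'app, hc, Fin.cons_self_tail (w ∘ σ)] at this
      obtain ⟨j, m, h, v, hv, ⟨u, hu⟩, hn⟩ := ih ω' hω'ne
      refine ⟨j + 1, m, by omega, Fin.cons c v, ?_, ⟨u, ?_⟩, ?_⟩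
      · intro i
        induction i using Fin.cases with
        | zero => simpa using hcC
        | succ i => simpa using hv i
      · rw [key_cons h]
        rw [hω'app] at hu
        exact hu
      · intro u' hu'
        rw [key_cons h]
        rw [← hω'app]
        exact hn u' hu'

theorem statement0 (V : Type*) [AddCommGroup V] [Module ℝ V] [FiniteDimensional ℝ V]
    (C : Submodule ℝ V) (k : ℕ) (ω : V [⋀^Fin k]→ₗ[ℝ] ℝ) (hω : ω ≠ 0) :
    ∃ (j : ℕ) (_ : j ≤ Module.finrank ℝ C) (hjk : j ≤ k) (v : Fin j → V),
      (∀ i, v i ∈ C) ∧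
      (∃ u : Fin (k - j) → V,
        ω (Fin.append v u ∘ Fin.cast (Nat.add_sub_cancel' hjk).symm) ≠ 0) ∧
      (∀ u : Fin (k - j) → V, (∃ i, u i ∈ C) →
        ω (Fin.append v u ∘ Fin.cast (Nat.add_sub_cancel' hjk).symm) = 0) := by
  obtain ⟨j, m, h, v, hv, ⟨u, hu⟩, hn⟩ := aux V C k ω hω
  have hjk : j ≤ k := by omega
  obtain rfl : m = k - j := by omega
  have hind : j ≤ Module.finrank ℝ C := by
    -- the full tuple is linearly independent since ω is nonzero on it
    have hli : LinearIndependent ℝ (Fin.append v u ∘ Fin.cast h) := by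
      by_contra hdep
      exact hu (ω.map_linearDependent _ hdep)
    have hliv : LinearIndependent ℝ v := by
      have h2 := hli.comp (fun i : Fin j => Fin.cast h.symm (Fin.castAdd (k - j) i))
        (fun a b hab => by
          simpa [Fin.ext_iff] using hab)
      have hcomp : ((Fin.append v u ∘ Fin.cast h) ∘
          fun i : Fin j => Fin.cast h.symm (Fin.castAdd (k - j) i)) = v := by
        funext i
        simp
      rwa [hcomp] at h2
    have hlivC : LinearIndependent ℝ (fun i : Fin j => (⟨v i, hv i⟩ : C)) :=
      LinearIndependent.of_comp C.subtype
        (show LinearIndependent ℝ (C.subtype ∘ fun i : Fin j => (⟨v i, hv i⟩ : C)) from hliv)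
    simpa using hlivC.fintype_card_le_finrank
  exact ⟨j, hind, hjk, v, hv, ⟨u, hu⟩, hn⟩
end

section
/- Let V be a real vector space of dimension n and Ω an alternating 2-form on V of rank p ≥ 1 (i.e. Ω^{∧p} ≠ 0 and Ω^{∧(p+1)} = 0). Then for every integer l with p ≤ l ≤ n − 2 there exists a nonzero alternating l-form β on V such that Ω ∧ β = 0. -/
/-!
If `Ω ^ (p + 1) = 0` then `Ω = ∑ᵢ aᵢ ∧ bᵢ` with `p` terms. This goes by induction on `p` using
interior products `i_d`: for `Ω ≠ 0` pick `d` with `i_d Ω = a ≠ 0`, then `d'` with `d' a = 1`,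
and put `b = i_{d'} Ω`. The remainder `Ω' = Ω - a ∧ b` is killed by `i_d` and `i_{d'}`, so
contracting `0 = (Ω' + a ∧ b) ^ (p + 1) = Ω' ^ (p + 1) + (p + 1) Ω' ^ p ∧ a ∧ b` first with `i_d`
and then with `i_{d'}` leaves `Ω' ^ p = 0`.
The `aᵢ` span a space of dimension at most `p ≤ l`, which lies in the span of `l` independent
one-forms `f₁, …, f_l`; then `β = f₁ ∧ ⋯ ∧ f_l ≠ 0` and `aᵢ ∧ β = 0`, so `Ω ∧ β = 0`.
-/

theorem Commute.add_pow_succ_of_mul_self_eq_zero {A : Type*} [Semiring A] {x y : A}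
    (hxy : Commute x y) (hy : y * y = 0) (n : ℕ) :
    (x + y) ^ (n + 1) = x ^ (n + 1) + (n + 1) • (x ^ n * y) := by
  induction n with
  | zero => simp
  | succ n ih =>
    calc (x + y) ^ (n + 2) = (x ^ (n + 1) + (n + 1) • (x ^ n * y)) * (x + y) := by
          rw [pow_succ, ih]
      _ = x ^ (n + 2) + x ^ (n + 1) * y + (n + 1) • (x ^ n * (y * x)) +
          (n + 1) • (x ^ n * (y * y)) := by
        simp only [add_mul, mul_add, smul_mul_assoc, mul_assoc, pow_succ]
        abel
      _ = x ^ (n + 2) + (n + 2) • (x ^ (n + 1) * y) := by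
        rw [hy, hxy.symm.eq, mul_zero, smul_zero, add_zero, ← mul_assoc, ← pow_succ, add_assoc,
          ← succ_nsmul']

namespace ExteriorAlgebra

section CommRing

variable {R M : Type*} [CommRing R] [AddCommGroup M] [Module R M]

noncomputable def contract (d : Module.Dual R M) : ExteriorAlgebra R M →ₗ[R] ExteriorAlgebra R M :=
  CliffordAlgebra.contractLeft (Q := 0) d

variable (d d' : Module.Dual R M)

theorem contract_ι_mul (m : M) (x : ExteriorAlgebra R M) :
    contract d (ι R m * x) = d m • x - ι R m * contract d x :=
  CliffordAlgebra.contractLeft_ι_mul d m x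

theorem contract_ι (m : M) : contract d (ι R m) = algebraMap R _ (d m) :=
  CliffordAlgebra.contractLeft_ι (Q := 0) d m

theorem contract_one : contract d (1 : ExteriorAlgebra R M) = 0 := by
  rw [← map_one (algebraMap R _)]
  exact CliffordAlgebra.contractLeft_algebraMap (Q := 0) d 1

theorem contract_contract (x : ExteriorAlgebra R M) : contract d (contract d x) = 0 :=
  CliffordAlgebra.contractLeft_contractLeft d x

theorem contract_comm (x : ExteriorAlgebra R M) :
    contract d (contract d' x) = -contract d' (contract d x) :=
  CliffordAlgebra.contractLeft_comm d d' x

theorem contract_ι_mul_ι (u v : M) :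
    contract d (ι R u * ι R v) = d u • ι R v - d v • ι R u := by
  rw [contract_ι_mul, contract_ι, ← Algebra.commutes, ← Algebra.smul_def]

theorem ι_mul_ι_comm (u v : M) : ι R u * ι R v = -(ι R v * ι R u) :=
  eq_neg_of_add_eq_zero_left (ι_add_mul_swap u v)

theorem ι_mul_ι_mul_self (u v : M) : ι R u * ι R v * (ι R u * ι R v) = 0 := by
  rw [mul_assoc, ← mul_assoc (ι R v), ι_mul_ι_comm v u]
  simp [← mul_assoc]

theorem ι_mul_ιMulti_eq_zero_of_mem_span {n : ℕ} {f : Fin n → M} {m : M}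
    (hm : m ∈ Submodule.span R (Set.range f)) : ι R m * ιMulti R n f = 0 := by
  have hspan : Submodule.span R (Set.range f) ≤
      LinearMap.ker (LinearMap.mulRight R (ιMulti R n f) ∘ₗ ι R) := by
    rw [Submodule.span_le]
    rintro _ ⟨i, rfl⟩
    calc ι R (f i) * ιMulti R n f = ιMulti R (n + 1) (Matrix.vecCons (f i) f) := by
          simp [ιMulti_succ_apply]
      _ = 0 := AlternatingMap.map_eq_zero_of_eq _ _ (i := 0) (j := i.succ) (by simp)
          (Fin.succ_ne_zero i).symm
  exact hspan hm

theorem ι_mul_ι_mem_exteriorPower_two (u v : M) : ι R u * ι R v ∈ ⋀[R]^2 M := by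
  rw [exteriorPower, pow_two]
  exact Submodule.mul_mem_mul ⟨u, rfl⟩ ⟨v, rfl⟩

@[elab_as_elim]
theorem exteriorPower_two_induction
    {P : (x : ExteriorAlgebra R M) → x ∈ ⋀[R]^2 M → Prop}
    (ι_mul_ι : ∀ u v, P (ι R u * ι R v) (ι_mul_ι_mem_exteriorPower_two u v))
    (add : ∀ x hx y hy, P x hx → P y hy → P (x + y) (add_mem hx hy))
    {x : ExteriorAlgebra R M} (hx : x ∈ ⋀[R]^2 M) : P x hx := by
  have hsq : ⋀[R]^2 M = LinearMap.range (ι R) * LinearMap.range (ι R) := by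
    rw [exteriorPower, pow_two]
  have key : ∀ y (hy : y ∈ LinearMap.range (ι R) * LinearMap.range (ι R)), P y (hsq ▸ hy) := by
    intro y hy
    induction hy using Submodule.mul_induction_on' with
    | mem_mul_mem _ hu _ hv =>
      obtain ⟨u, rfl⟩ := hu
      obtain ⟨v, rfl⟩ := hv
      exact ι_mul_ι u v
    | add y _ z _ py pz => exact add y _ z _ py pz
  exact key x (hsq ▸ hx)

theorem commute_ι_of_mem_exteriorPower_two (m : M) {x : ExteriorAlgebra R M}
    (hx : x ∈ ⋀[R]^2 M) : Commute (ι R m) x := by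
  induction hx using exteriorPower_two_induction with
  | ι_mul_ι u v =>
    show ι R m * (ι R u * ι R v) = ι R u * ι R v * ι R m
    rw [← mul_assoc, ι_mul_ι_comm m, neg_mul, mul_assoc, ι_mul_ι_comm m, mul_neg, neg_neg,
      mul_assoc]
  | add x _ y _ hx hy => exact hx.add_right hy

theorem commute_of_mem_exteriorPower_two {x y : ExteriorAlgebra R M}
    (hx : x ∈ ⋀[R]^2 M) (hy : y ∈ ⋀[R]^2 M) : Commute x y := by
  induction hx using exteriorPower_two_induction with
  | ι_mul_ι u v =>
    exact (commute_ι_of_mem_exteriorPower_two u hy).mul_left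
      (commute_ι_of_mem_exteriorPower_two v hy)
  | add x _ x' _ hx hx' => exact hx.add_left hx'

theorem contract_mul_of_mem_exteriorPower_two {x : ExteriorAlgebra R M} (hx : x ∈ ⋀[R]^2 M)
    (y : ExteriorAlgebra R M) : contract d (x * y) = contract d x * y + x * contract d y := by
  induction hx using exteriorPower_two_induction with
  | ι_mul_ι u v =>
    rw [mul_assoc, contract_ι_mul, contract_ι_mul, contract_ι_mul_ι]
    simp only [mul_sub, mul_smul_comm, sub_mul, smul_mul_assoc, mul_assoc]
    abel
  | add x _ x' _ hx hx' => simp only [add_mul, map_add, hx, hx']; abel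

theorem exists_contract_eq_ι {x : ExteriorAlgebra R M} (hx : x ∈ ⋀[R]^2 M) :
    ∃ m, contract d x = ι R m := by
  induction hx using exteriorPower_two_induction with
  | ι_mul_ι u v => exact ⟨d u • v - d v • u, by simp [contract_ι_mul_ι]⟩
  | add x _ x' _ hx hx' =>
    obtain ⟨m, hm⟩ := hx
    obtain ⟨m', hm'⟩ := hx'
    exact ⟨m + m', by simp [hm, hm']⟩

theorem contract_pow_mul {x : ExteriorAlgebra R M} (hx : x ∈ ⋀[R]^2 M) (hd : contract d x = 0)
    (n : ℕ) (y : ExteriorAlgebra R M) : contract d (x ^ n * y) = x ^ n * contract d y := by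
  induction n with
  | zero => simp
  | succ n ih =>
    rw [pow_succ', mul_assoc, contract_mul_of_mem_exteriorPower_two d hx, hd, zero_mul, zero_add,
      ih, mul_assoc]

theorem sum_ι_mul_contract_coord {I : Type*} [Fintype I] (e : Module.Basis I R M)
    {x : ExteriorAlgebra R M} (hx : x ∈ ⋀[R]^2 M) :
    ∑ i, ι R (e i) * contract (e.coord i) x = (2 : R) • x := by
  have hsum (w : M) : ∑ i, e.coord i w • ι R (e i) = ι R w := by
    simp_rw [← map_smul, ← map_sum, Module.Basis.coord_apply, e.sum_repr]
  induction hx using exteriorPower_two_induction with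
  | ι_mul_ι u v =>
    simp only [contract_ι_mul_ι, mul_sub, mul_smul_comm, Finset.sum_sub_distrib,
      ← Finset.sum_mul, ← smul_mul_assoc, hsum]
    rw [ι_mul_ι_comm v u, sub_neg_eq_add, two_smul, add_mul]
  | add x _ x' _ hx hx' => simp only [map_add, mul_add, Finset.sum_add_distrib, hx, hx', smul_add]

end CommRing

section CharZero

variable {K M : Type*} [Field K] [CharZero K] [AddCommGroup M] [Module K M]

theorem eq_zero_of_forall_contract_eq_zero [FiniteDimensional K M] {x : ExteriorAlgebra K M}
    (hx : x ∈ ⋀[K]^2 M) (h : ∀ d : Module.Dual K M, contract d x = 0) : x = 0 := by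
  have := sum_ι_mul_contract_coord (Module.finBasis K M) hx
  simp only [h, mul_zero, Finset.sum_const_zero] at this
  exact (smul_eq_zero.mp this.symm).resolve_left two_ne_zero

theorem exists_contract_sub_ι_mul_ι_eq_zero [FiniteDimensional K M] {ω : ExteriorAlgebra K M}
    (hω : ω ∈ ⋀[K]^2 M) (hω0 : ω ≠ 0) :
    ∃ (a b : M) (d d' : Module.Dual K M), d' a = 1 ∧ contract d (ι K a * ι K b) = ι K a ∧
      contract d (ω - ι K a * ι K b) = 0 ∧ contract d' (ω - ι K a * ι K b) = 0 := by
  obtain ⟨d, hd⟩ : ∃ d, contract d ω ≠ 0 := by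
    by_contra! h
    exact hω0 (eq_zero_of_forall_contract_eq_zero hω h)
  obtain ⟨a, ha⟩ := exists_contract_eq_ι d hω
  have ha0 : a ≠ 0 := by
    rintro rfl
    exact hd (by rw [ha, map_zero])
  obtain ⟨d', hd'a⟩ := Module.Projective.exists_dual_eq_one K ha0
  obtain ⟨b, hb⟩ := exists_contract_eq_ι d' hω
  have hinj := (algebraMap K (ExteriorAlgebra K M)).injective
  have hda : d a = 0 := hinj (by rw [map_zero, ← contract_ι, ← ha, contract_contract])
  have hd'b : d' b = 0 := hinj (by rw [map_zero, ← contract_ι, ← hb, contract_contract])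
  have hdb : d b = -1 := hinj (by
    rw [map_neg, ← hd'a, ← contract_ι, ← contract_ι, ← ha, ← hb, contract_comm])
  have hdt : contract d (ι K a * ι K b) = ι K a := by
    rw [contract_ι_mul_ι, hda, hdb, zero_smul, zero_sub, neg_smul, one_smul, neg_neg]
  refine ⟨a, b, d, d', hd'a, hdt, ?_, ?_⟩
  · rw [map_sub, hdt, ha, sub_self]
  · rw [map_sub, contract_ι_mul_ι, hd'a, hd'b, hb, zero_smul, sub_zero, one_smul, sub_self]

theorem pow_eq_zero_of_add_ι_mul_ι_pow_eq_zero {ω : ExteriorAlgebra K M} (hω : ω ∈ ⋀[K]^2 M)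
    {a b : M} {d d' : Module.Dual K M} (hd'a : d' a = 1)
    (hdt : contract d (ι K a * ι K b) = ι K a) (hdω : contract d ω = 0)
    (hd'ω : contract d' ω = 0) {k : ℕ} (h : (ω + ι K a * ι K b) ^ (k + 2) = 0) :
    ω ^ (k + 1) = 0 := by
  have hexp := (commute_of_mem_exteriorPower_two hω (ι_mul_ι_mem_exteriorPower_two a b))
    |>.add_pow_succ_of_mul_self_eq_zero (ι_mul_ι_mul_self a b) (k + 1)
  rw [h] at hexp
  have hωa : ω ^ (k + 1) * ι K a = 0 := by
    have h0 := congrArg (contract d) hexp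
    rw [map_zero, map_add, map_nsmul, ← mul_one (ω ^ (k + 2)), contract_pow_mul d hω hdω,
      contract_pow_mul d hω hdω, contract_one, mul_zero, zero_add, hdt,
      ← Nat.cast_smul_eq_nsmul K] at h0
    exact (smul_eq_zero.mp h0.symm).resolve_left (Nat.cast_ne_zero.mpr (Nat.succ_ne_zero _))
  calc ω ^ (k + 1) = ω ^ (k + 1) * contract d' (ι K a) := by
        rw [contract_ι, hd'a, map_one, mul_one]
    _ = contract d' (ω ^ (k + 1) * ι K a) := (contract_pow_mul d' hω hd'ω _ _).symm
    _ = 0 := by rw [hωa, map_zero]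

theorem exists_eq_sum_ι_mul_ι_of_pow_succ_eq_zero [FiniteDimensional K M] {k : ℕ} :
    ∀ {ω : ExteriorAlgebra K M}, ω ∈ ⋀[K]^2 M → ω ^ (k + 1) = 0 →
      ∃ a b : Fin k → M, ω = ∑ i, ι K (a i) * ι K (b i) := by
  induction k with
  | zero => exact fun _ h => ⟨finZeroElim, finZeroElim, by simpa using h⟩
  | succ k ih =>
    intro ω hω h
    obtain rfl | hω0 := eq_or_ne ω 0
    · exact ⟨0, 0, by simp⟩
    obtain ⟨a, b, d, d', hd'a, hdt, hdω, hd'ω⟩ := exists_contract_sub_ι_mul_ι_eq_zero hω hω0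
    have hω' := sub_mem hω (ι_mul_ι_mem_exteriorPower_two a b)
    obtain ⟨a', b', h'⟩ := ih hω' <| pow_eq_zero_of_add_ι_mul_ι_pow_eq_zero hω' hd'a hdt hdω hd'ω
      (by rwa [sub_add_cancel])
    exact ⟨Fin.snoc a' a, Fin.snoc b' b, by simp [Fin.sum_univ_castSucc, ← h']⟩

end CharZero

end ExteriorAlgebra

theorem exteriorPower.ιMulti_ne_zero_of_linearIndependent {K M : Type*} [Field K]
    [AddCommGroup M] [Module K M] {n : ℕ} {f : Fin n → M} (hf : LinearIndependent K f) :
    ιMulti K n f ≠ 0 := by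
  simpa [ιMulti_family] using (ιMulti_family_linearIndependent_field (n := n) hf).ne_zero
    (Set.powersetCard.ofFinEmbEquiv (OrderIso.refl (Fin n)).toOrderEmbedding)

theorem exists_linearIndependent_le_span {K M : Type*} [Field K] [AddCommGroup M] [Module K M]
    [FiniteDimensional K M] (W : Submodule K M) {l : ℕ} (hWl : Module.finrank K W ≤ l)
    (hl : l ≤ Module.finrank K M) :
    ∃ f : Fin l → M, LinearIndependent K f ∧ W ≤ Submodule.span K (Set.range f) := by
  induction l, hWl using Nat.le_induction with
  | base =>
    let e := Module.finBasis K W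
    refine ⟨W.subtype ∘ e, e.linearIndependent.map' _ W.ker_subtype, ?_⟩
    rw [Set.range_comp, ← Submodule.map_span, e.span_eq, Submodule.map_subtype_top]
  | succ l _ ih =>
    obtain ⟨f, hf, hWf⟩ := ih (Nat.le_of_succ_le hl)
    obtain ⟨x, hx⟩ := exists_linearIndependent_snoc_of_lt_finrank hf hl
    refine ⟨Fin.snoc f x, hx, hWf.trans (Submodule.span_mono ?_)⟩
    rintro _ ⟨i, rfl⟩
    exact ⟨i.castSucc, Fin.snoc_castSucc ..⟩

open ExteriorAlgebra in
theorem statement2_general (V : Type*) [AddCommGroup V] [Module ℝ V] [FiniteDimensional ℝ V]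
    (p : ℕ) (Ω : ⋀[ℝ]^2 (Module.Dual ℝ V))
    (hp' : (Ω : ExteriorAlgebra ℝ (Module.Dual ℝ V)) ^ (p + 1) = 0) :
    ∀ l : ℕ, p ≤ l → l ≤ Module.finrank ℝ V - 2 →
      ∃ β : ⋀[ℝ]^l (Module.Dual ℝ V), β ≠ 0 ∧
        (Ω : ExteriorAlgebra ℝ (Module.Dual ℝ V)) * (β : ExteriorAlgebra ℝ (Module.Dual ℝ V))
          = 0 := by
  intro l hpl hln
  obtain ⟨a, b, hΩ⟩ := exists_eq_sum_ι_mul_ι_of_pow_succ_eq_zero Ω.2 hp'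
  obtain ⟨f, hf, ha⟩ := exists_linearIndependent_le_span (Submodule.span ℝ (Set.range a))
    ((finrank_range_le_card a).trans (by simpa using hpl))
    (hln.trans (by rw [Subspace.dual_finrank_eq]; omega))
  refine ⟨exteriorPower.ιMulti ℝ l f, exteriorPower.ιMulti_ne_zero_of_linearIndependent hf, ?_⟩
  rw [exteriorPower.ιMulti_apply_coe, hΩ, Finset.sum_mul]
  refine Finset.sum_eq_zero fun i _ => ?_
  rw [ι_mul_ι_comm, neg_mul, mul_assoc,
    ι_mul_ιMulti_eq_zero_of_mem_span (ha (Submodule.subset_span ⟨i, rfl⟩)), mul_zero, neg_zero]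

theorem statement2 (V : Type*) [AddCommGroup V] [Module ℝ V] [FiniteDimensional ℝ V]
    (p : ℕ) (hp1 : 1 ≤ p) (Ω : ⋀[ℝ]^2 (Module.Dual ℝ V))
    (hp : (Ω : ExteriorAlgebra ℝ (Module.Dual ℝ V)) ^ p ≠ 0)
    (hp' : (Ω : ExteriorAlgebra ℝ (Module.Dual ℝ V)) ^ (p + 1) = 0) :
    ∀ l : ℕ, p ≤ l → l ≤ Module.finrank ℝ V - 2 →
      ∃ β : ⋀[ℝ]^l (Module.Dual ℝ V), β ≠ 0 ∧
        (Ω : ExteriorAlgebra ℝ (Module.Dual ℝ V)) * (β : ExteriorAlgebra ℝ (Module.Dual ℝ V))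
          = 0 :=
  statement2_general V p Ω hp'
end

section
/- Let V be a real vector space of dimension 2p and ω an alternating 2-form on V with trivial kernel, i.e. ω^{∧p} ≠ 0. Then for every integer k with 0 ≤ k ≤ p − 1, the linear map λ^k from alternating k-forms to alternating (k+2)-forms given by β ↦ ω ∧ β is injective. -/
/-!
Write `L = ω ∧ ·`. Darboux's theorem and `ω^p ≠ 0` give a basis `(e, f)` of `V^*` with
`ω = ∑ᵢ eᵢ ∧ fᵢ`; it is proved by splitting off one pair `v ∧ a` at a time, which strictly enlarges
the kernel of `d ↦ d ⌋ ω`. Let `Λ = ∑ᵢ fᵢ^* ⌋ eᵢ^* ⌋ ·` (interior products with the dual basis)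
and let `N` be the number operator, which multiplies `k`-forms by `k`. Then `[Λ, L] = p - N`, so
for a `k`-form `β`
  `Λ L^{r+1} β = L^{r+1} Λ β + (r+1)(p-k-r) L^r β`.
If `L^{r+1} β = 0` with `k + r + 1 ≤ p`, multiplying by `L` gives `L^{r+2} Λ β = 0`, hence `Λ β = 0`
by induction on the degree, and then `L^r β = 0` as the coefficient is nonzero; induction on `r`
gives `β = 0`.
-/

theorem Finset.sum_pow_card_add_one_eq_zero {A ι : Type*} [Semiring A] (s : Finset ι) {w : ι → A}
    (hcomm : ∀ i ∈ s, ∀ j ∈ s, Commute (w i) (w j)) (hsq : ∀ i ∈ s, w i * w i = 0) :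
    (∑ i ∈ s, w i) ^ (s.card + 1) = 0 := by
  classical
  induction s using Finset.induction with
  | empty => simp
  | insert j s hj ih =>
    rw [Finset.sum_insert hj, Finset.card_insert_of_notMem hj]
    refine Commute.add_pow_eq_zero_of_add_le_succ_of_pow_eq_zero
      (Commute.sum_right _ _ _ fun i hi => hcomm j (by simp) i (by simp [hi]))
      (m := 2) (by rw [pow_two, hsq j (by simp)])
      (ih (fun i hi k hk => hcomm i (by simp [hi]) k (by simp [hk]))
        fun i hi => hsq i (by simp [hi]))
      (by omega)

open ExteriorAlgebra

local notation:70 d:70 " ⌋ " x:71 => CliffordAlgebra.contractLeft d x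

section Contraction

variable {R M : Type*} [CommRing R] [AddCommGroup M] [Module R M]

theorem ExteriorAlgebra.ι_mul_ι_anticomm (a b : M) : ι R a * ι R b = -(ι R b * ι R a) :=
  eq_neg_of_add_eq_zero_left (ι_add_mul_swap a b)

theorem ExteriorAlgebra.ι_commute_ι_mul_ι (a b c : M) : Commute (ι R a) (ι R b * ι R c) := by
  rw [Commute, SemiconjBy, ← mul_assoc, ι_mul_ι_anticomm a b, neg_mul, mul_assoc,
    ι_mul_ι_anticomm a c, mul_neg, neg_neg, mul_assoc]

theorem ExteriorAlgebra.ι_mul_ι_mul_self_s5 (a b : M) :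
    (ι R a * ι R b) * (ι R a * ι R b) = 0 := by
  rw [mul_assoc, (ι_commute_ι_mul_ι b a b).eq, ← mul_assoc, ← mul_assoc, ι_sq_zero, zero_mul,
    zero_mul]

theorem ExteriorAlgebra.ι_mul_ι_mem_exteriorPower_two_s5 (a b : M) :
    ι R a * ι R b ∈ ⋀[R]^2 M := by
  rw [exteriorPower, pow_two]
  exact Submodule.mul_mem_mul (LinearMap.mem_range_self _ _) (LinearMap.mem_range_self _ _)

theorem ExteriorAlgebra.sum_ι_mul_ι_pow_eq_zero {m : ℕ} (x y : Fin m → M) :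
    (∑ i, ι R (x i) * ι R (y i)) ^ (m + 1) = 0 := by
  simpa using Finset.univ.sum_pow_card_add_one_eq_zero
    (fun i _ j _ => ((ι_commute_ι_mul_ι _ _ _).mul_left (ι_commute_ι_mul_ι _ _ _)))
    fun i _ => ι_mul_ι_mul_self_s5 (x i) (y i)

theorem contractLeft_ι_mul_ι (d : Module.Dual R M) (a b : M) :
    d ⌋ (ι R a * ι R b) = d a • ι R b - d b • ι R a := by
  rw [CliffordAlgebra.contractLeft_ι_mul, CliffordAlgebra.contractLeft_ι, ← Algebra.commutes,
    ← Algebra.smul_def]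

theorem contractLeft_ι_mul_ι_mul (d : Module.Dual R M) (a b : M) (x : ExteriorAlgebra R M) :
    d ⌋ (ι R a * (ι R b * x)) =
      d a • (ι R b * x) - d b • (ι R a * x) + ι R a * (ι R b * (d ⌋ x)) := by
  rw [CliffordAlgebra.contractLeft_ι_mul, CliffordAlgebra.contractLeft_ι_mul, mul_sub,
    mul_smul_comm]
  abel

theorem contractLeft_mem_exteriorPower (d : Module.Dual R M) {n : ℕ} {x : ExteriorAlgebra R M}
    (hx : x ∈ ⋀[R]^(n + 1) M) : d ⌋ x ∈ ⋀[R]^n M := by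
  induction n generalizing x with
  | zero =>
    obtain ⟨m, rfl⟩ : x ∈ LinearMap.range (ι R) := by simpa using hx
    rw [CliffordAlgebra.contractLeft_ι]
    exact Submodule.algebraMap_mem _
  | succ n ih =>
    rw [exteriorPower, pow_succ'] at hx
    refine Submodule.mul_induction_on hx (fun _ ⟨m, hm⟩ b hb => ?_) fun _ _ ha hb => ?_
    · rw [← hm, CliffordAlgebra.contractLeft_ι_mul]
      refine sub_mem (Submodule.smul_mem _ _ hb) ?_
      rw [exteriorPower, pow_succ']
      exact Submodule.mul_mem_mul (LinearMap.mem_range_self _ _) (ih hb)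
    · rw [map_add]
      exact add_mem ha hb

theorem contractLeft_eq_zero_of_mem_exteriorPower_zero (d : Module.Dual R M)
    {x : ExteriorAlgebra R M} (hx : x ∈ ⋀[R]^0 M) : d ⌋ x = 0 := by
  obtain ⟨r, rfl⟩ := Submodule.mem_one.mp hx
  exact CliffordAlgebra.contractLeft_algebraMap _ d r

end Contraction

section NumberOperator

variable {R M I : Type*} [CommRing R] [AddCommGroup M] [Module R M] [Fintype I]

noncomputable def numberOperator (b : Module.Basis I R M) :
    ExteriorAlgebra R M →ₗ[R] ExteriorAlgebra R M :=
  ∑ i, LinearMap.mulLeft R (ι R (b i)) ∘ₗ CliffordAlgebra.contractLeft (b.coord i)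

theorem numberOperator_apply (b : Module.Basis I R M) (x : ExteriorAlgebra R M) :
    numberOperator b x = ∑ i, ι R (b i) * (b.coord i ⌋ x) := by
  simp [numberOperator]

theorem numberOperator_ι_mul (b : Module.Basis I R M) (m : M) (x : ExteriorAlgebra R M) :
    numberOperator b (ι R m * x) = ι R m * x + ι R m * numberOperator b x := by
  have expand : ∑ i, b.coord i m • (ι R (b i) * x) = ι R m * x := by
    simp_rw [← smul_mul_assoc, ← Finset.sum_mul, ← map_smul, ← map_sum, Module.Basis.coord_apply,
      b.sum_repr]
  simp_rw [numberOperator_apply, CliffordAlgebra.contractLeft_ι_mul, mul_sub, mul_smul_comm,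
    ← mul_assoc, ι_mul_ι_anticomm _ m, neg_mul, mul_assoc, sub_neg_eq_add, Finset.sum_add_distrib,
    expand, Finset.mul_sum]

theorem numberOperator_of_mem_exteriorPower (b : Module.Basis I R M) {n : ℕ}
    {x : ExteriorAlgebra R M} (hx : x ∈ ⋀[R]^n M) : numberOperator b x = (n : R) • x := by
  induction n generalizing x with
  | zero =>
    simp [numberOperator_apply, contractLeft_eq_zero_of_mem_exteriorPower_zero _ hx]
  | succ n ih =>
    rw [exteriorPower, pow_succ'] at hx
    refine Submodule.mul_induction_on hx (fun _ ⟨m, hm⟩ y hy => ?_) fun _ _ hy hz => ?_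
    · rw [← hm, numberOperator_ι_mul, ih hy, mul_smul_comm, Nat.cast_succ, add_smul, one_smul,
        add_comm]
    · rw [map_add, hy, hz, smul_add]

end NumberOperator

section Separation

variable {K M : Type*} [Field K] [CharZero K] [AddCommGroup M] [Module K M] [FiniteDimensional K M]

theorem eq_zero_of_forall_contractLeft_eq_zero {n : ℕ} {x : ExteriorAlgebra K M}
    (hx : x ∈ ⋀[K]^(n + 1) M) (h : ∀ d : Module.Dual K M, d ⌋ x = 0) : x = 0 := by
  have hN := numberOperator_of_mem_exteriorPower (Module.finBasis K M) hx
  simp only [numberOperator_apply, h, mul_zero, Finset.sum_const_zero] at hN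
  exact (smul_eq_zero.mp hN.symm).resolve_left (Nat.cast_ne_zero.mpr n.succ_ne_zero)

end Separation

section Lefschetz

variable {R M I : Type*} [CommRing R] [AddCommGroup M] [Module R M] [Fintype I]
variable (z : Module.Basis (I ⊕ I) R M)

noncomputable def symplecticForm : ExteriorAlgebra R M :=
  ∑ i, ι R (z (.inl i)) * ι R (z (.inr i))

noncomputable def dualLefschetz : ExteriorAlgebra R M →ₗ[R] ExteriorAlgebra R M :=
  ∑ i, CliffordAlgebra.contractLeft (z.coord (.inr i)) ∘ₗ
    CliffordAlgebra.contractLeft (z.coord (.inl i))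

theorem dualLefschetz_apply (x : ExteriorAlgebra R M) :
    dualLefschetz z x = ∑ i, z.coord (.inr i) ⌋ (z.coord (.inl i) ⌋ x) := by
  simp [dualLefschetz]

theorem contractLeft_contractLeft_ι_mul_ι_mul (e f : Module.Dual R M) (a b : M)
    (x : ExteriorAlgebra R M) :
    f ⌋ (e ⌋ (ι R a * (ι R b * x))) =
      (e a * f b - e b * f a) • x - e a • (ι R b * (f ⌋ x)) + e b • (ι R a * (f ⌋ x))
        + f a • (ι R b * (e ⌋ x)) - f b • (ι R a * (e ⌋ x))
        + ι R a * (ι R b * (f ⌋ (e ⌋ x))) := by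
  rw [contractLeft_ι_mul_ι_mul, map_add, map_sub, map_smul, map_smul, contractLeft_ι_mul_ι_mul,
    CliffordAlgebra.contractLeft_ι_mul, CliffordAlgebra.contractLeft_ι_mul]
  module

theorem dualLefschetz_symplecticForm_mul (x : ExteriorAlgebra R M) :
    dualLefschetz z (symplecticForm z * x) =
      symplecticForm z * dualLefschetz z x + (Fintype.card I : R) • x - numberOperator z x := by
  classical
  simp only [dualLefschetz_apply, symplecticForm, numberOperator_apply, Finset.sum_mul, mul_assoc,
    map_sum, contractLeft_contractLeft_ι_mul_ι_mul, Module.Basis.coord_apply,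
    Module.Basis.repr_self, Finsupp.single_apply, Sum.inl.injEq, Sum.inr.injEq, reduceCtorEq]
  simp only [if_false, mul_zero, sub_zero, zero_smul, add_zero, mul_ite, mul_one, ite_smul,
    one_smul, Finset.sum_add_distrib, Finset.sum_sub_distrib, Finset.sum_ite_eq,
    Finset.mem_univ, if_true, Fintype.sum_sum_type, Finset.mul_sum, Finset.sum_const,
    Finset.card_univ, ← Nat.cast_smul_eq_nsmul R]
  abel

theorem symplecticForm_mul_mem {k : ℕ} {x : ExteriorAlgebra R M} (hx : x ∈ ⋀[R]^k M) :
    symplecticForm z * x ∈ ⋀[R]^(k + 2) M := by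
  rw [add_comm, exteriorPower, pow_add]
  exact Submodule.mul_mem_mul
    (Submodule.sum_mem _ fun i _ => ι_mul_ι_mem_exteriorPower_two_s5 _ _) hx

theorem dualLefschetz_mem {k : ℕ} {x : ExteriorAlgebra R M} (hx : x ∈ ⋀[R]^(k + 2) M) :
    dualLefschetz z x ∈ ⋀[R]^k M := by
  rw [dualLefschetz_apply]
  exact Submodule.sum_mem _ fun i _ =>
    contractLeft_mem_exteriorPower _ (contractLeft_mem_exteriorPower _ hx)

theorem dualLefschetz_eq_zero_of_lt_two {k : ℕ} (hk : k < 2) {x : ExteriorAlgebra R M}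
    (hx : x ∈ ⋀[R]^k M) : dualLefschetz z x = 0 := by
  rw [dualLefschetz_apply]
  refine Finset.sum_eq_zero fun i _ => ?_
  interval_cases k
  · rw [contractLeft_eq_zero_of_mem_exteriorPower_zero _ hx, map_zero]
  · exact contractLeft_eq_zero_of_mem_exteriorPower_zero _ (contractLeft_mem_exteriorPower _ hx)

theorem dualLefschetz_symplecticForm_pow_mul {k : ℕ} {x : ExteriorAlgebra R M}
    (hx : x ∈ ⋀[R]^k M) (r : ℕ) :
    dualLefschetz z (symplecticForm z ^ (r + 1) * x) =
      symplecticForm z ^ (r + 1) * dualLefschetz z x +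
        (((r : R) + 1) * ((Fintype.card I : R) - k - r)) • (symplecticForm z ^ r * x) := by
  induction r generalizing k x with
  | zero =>
    rw [zero_add, pow_one, dualLefschetz_symplecticForm_mul,
      numberOperator_of_mem_exteriorPower z hx, pow_zero, one_mul]
    module
  | succ r ih =>
    rw [pow_succ, mul_assoc, ih (symplecticForm_mul_mem z hx), dualLefschetz_symplecticForm_mul,
      numberOperator_of_mem_exteriorPower z hx, ← mul_assoc, ← pow_succ, mul_sub, mul_add,
      ← mul_assoc, ← pow_succ, mul_smul_comm, mul_smul_comm]
    push_cast
    module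

end Lefschetz

section Injectivity

variable {K M I : Type*} [Field K] [CharZero K] [AddCommGroup M] [Module K M] [Fintype I]
variable (z : Module.Basis (I ⊕ I) K M)

theorem eq_zero_of_symplecticForm_pow_mul_eq_zero {k r : ℕ} (hkr : k + r ≤ Fintype.card I)
    {x : ExteriorAlgebra K M} (hx : x ∈ ⋀[K]^k M) (h : symplecticForm z ^ r * x = 0) : x = 0 := by
  induction k using Nat.strong_induction_on generalizing r x with
  | _ k ihk =>
    induction r generalizing x with
    | zero => simpa using h
    | succ r ihr =>
      set c : K := ((r : K) + 1) * ((Fintype.card I : K) - k - r)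
      have hc : c ≠ 0 := by
        have : c = (((r + 1) * (Fintype.card I - k - r) : ℕ) : K) := by
          rw [Nat.cast_mul, Nat.cast_sub (by omega), Nat.cast_sub (by omega)]
          push_cast
          ring
        rw [this, Nat.cast_ne_zero]
        exact Nat.mul_ne_zero (Nat.succ_ne_zero r) (by omega)
      have hsl2 := dualLefschetz_symplecticForm_pow_mul z hx r
      rw [h, map_zero] at hsl2
      have hΛ : dualLefschetz z x = 0 := by
        by_cases hk : k < 2
        · exact dualLefschetz_eq_zero_of_lt_two z hk hx
        obtain ⟨k', rfl⟩ := Nat.exists_eq_add_of_le' (not_lt.mp hk)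
        refine ihk k' (by omega) (r := r + 2) (by omega) (dualLefschetz_mem z hx) ?_
        have := congrArg (symplecticForm z * ·) hsl2
        simp only [mul_zero, mul_add, mul_smul_comm, ← mul_assoc, ← pow_succ', h, smul_zero,
          add_zero] at this
        exact this.symm
      rw [hΛ, mul_zero, zero_add, eq_comm, smul_eq_zero] at hsl2
      exact ihr (by omega) hx (hsl2.resolve_left hc)

end Injectivity

section Darboux

variable {K M : Type*} [Field K] [AddCommGroup M] [Module K M]

theorem linearIndependent_sum_elim_fin_cons {m : ℕ} {x y : Fin m → M}
    (hxy : LinearIndependent K (Sum.elim x y)) {v a : M} {d d' : Module.Dual K M}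
    (hd : ∀ s, d (Sum.elim x y s) = 0) (hd' : ∀ s, d' (Sum.elim x y s) = 0)
    (hdv : d v = 0) (hda : d a ≠ 0) (hd'v : d' v ≠ 0) :
    LinearIndependent K (Sum.elim (Fin.cons v x : Fin (m + 1) → M) (Fin.cons a y)) := by
  rw [Fintype.linearIndependent_iff] at hxy ⊢
  intro g hg
  set g' : Fin m ⊕ Fin m → K := g ∘ Sum.map Fin.succ Fin.succ
  have hsplit : g (.inl 0) • v + g (.inr 0) • a + ∑ s, g' s • Sum.elim x y s = 0 := by
    rw [← hg, Fintype.sum_sum_type, Fintype.sum_sum_type, Fin.sum_univ_succ, Fin.sum_univ_succ]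
    simp only [g', Function.comp_apply, Sum.map_inl, Sum.map_inr, Sum.elim_inl, Sum.elim_inr,
      Fin.cons_zero, Fin.cons_succ]
    abel
  have hrest (e : Module.Dual K M) (he : ∀ s, e (Sum.elim x y s) = 0) :
      e (∑ s, g' s • Sum.elim x y s) = 0 := by
    simp only [map_sum, map_smul, he, smul_zero, Finset.sum_const_zero]
  have ha : g (.inr 0) = 0 := by
    have := congrArg d hsplit
    rw [map_add, map_add, hrest d hd, map_smul, map_smul, hdv, smul_eq_mul, smul_eq_mul] at this
    simpa [hda] using this
  have hv : g (.inl 0) = 0 := by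
    have := congrArg d' hsplit
    rw [map_add, map_add, hrest d' hd', map_smul, map_smul, ha, zero_smul, smul_eq_mul] at this
    simpa [hd'v] using this
  rw [hv, ha, zero_smul, zero_smul, zero_add, zero_add] at hsplit
  rintro (i | i) <;> refine Fin.cases ‹_› (fun j => ?_) i
  exacts [hxy g' hsplit (.inl j), hxy g' hsplit (.inr j)]

def contractionKernel (ω : ExteriorAlgebra K M) : Submodule K (Module.Dual K M) :=
  LinearMap.ker (CliffordAlgebra.contractLeft.flip ω)

theorem mem_contractionKernel {ω : ExteriorAlgebra K M} {e : Module.Dual K M} :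
    e ∈ contractionKernel ω ↔ e ⌋ ω = 0 :=
  Iff.rfl

theorem algebraMap_apply_eq_neg_contractLeft {ω : ExteriorAlgebra K M} {d : Module.Dual K M}
    {v : M} (hv : d ⌋ ω = ι K v) (e : Module.Dual K M) :
    algebraMap K _ (e v) = -(d ⌋ (e ⌋ ω)) := by
  rw [← CliffordAlgebra.contractLeft_ι, ← hv, CliffordAlgebra.contractLeft_comm]

theorem apply_eq_zero_of_mem_contractionKernel {ω : ExteriorAlgebra K M} {d e : Module.Dual K M}
    {v : M} (hv : d ⌋ ω = ι K v) (he : e ∈ contractionKernel ω) : e v = 0 := by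
  apply (algebraMap_leftInverse M).injective
  rw [algebraMap_apply_eq_neg_contractLeft hv, mem_contractionKernel.mp he, map_zero, neg_zero,
    map_zero]

theorem mem_contractionKernel_sub_ι_mul_ι {ω : ExteriorAlgebra K M} {v a : M}
    {e : Module.Dual K M} :
    e ∈ contractionKernel (ω - ι K v * ι K a) ↔ e ⌋ ω = e v • ι K a - e a • ι K v := by
  rw [mem_contractionKernel, map_sub, contractLeft_ι_mul_ι, sub_eq_zero]

variable [CharZero K] [FiniteDimensional K M]

theorem exists_darboux_pair {ω : ExteriorAlgebra K M} (hω : ω ∈ ⋀[K]^2 M) (h0 : ω ≠ 0) :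
    ∃ (v a : M) (d d' : Module.Dual K M), d ⌋ ω = ι K v ∧ d' ⌋ ω = ι K a ∧
      d v = 0 ∧ d a = -1 ∧ d' v = 1 ∧ d' a = 0 := by
  obtain ⟨d, hd⟩ : ∃ d : Module.Dual K M, d ⌋ ω ≠ 0 := by
    by_contra! h
    exact h0 (eq_zero_of_forall_contractLeft_eq_zero hω h)
  obtain ⟨v, hv⟩ : d ⌋ ω ∈ LinearMap.range (ι K) := by
    simpa using contractLeft_mem_exteriorPower d hω
  obtain ⟨d', hd'v⟩ := Module.Projective.exists_dual_eq_one K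
    (x := v) (by rintro rfl; exact hd (by rw [← hv, map_zero]))
  obtain ⟨a, ha⟩ : d' ⌋ ω ∈ LinearMap.range (ι K) := by
    simpa using contractLeft_mem_exteriorPower d' hω
  refine ⟨v, a, d, d', hv.symm, ha.symm, ?_, ?_, hd'v, ?_⟩ <;>
    apply (algebraMap_leftInverse M).injective
  · rw [algebraMap_apply_eq_neg_contractLeft hv.symm, CliffordAlgebra.contractLeft_contractLeft,
      neg_zero, map_zero]
  · rw [algebraMap_apply_eq_neg_contractLeft ha.symm, ← hv, CliffordAlgebra.contractLeft_ι, hd'v,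
      map_neg, map_one]
  · rw [algebraMap_apply_eq_neg_contractLeft ha.symm, CliffordAlgebra.contractLeft_contractLeft,
      neg_zero, map_zero]

/-- The second conjunct is the induction invariant that keeps each new pair independent of the
previous ones. -/
theorem exists_darboux_of_finrank_le (n : ℕ) {ω : ExteriorAlgebra K M} (hω : ω ∈ ⋀[K]^2 M)
    (hn : Module.finrank K (Module.Dual K M) ≤ Module.finrank K (contractionKernel ω) + n) :
    ∃ (m : ℕ) (x y : Fin m → M), LinearIndependent K (Sum.elim x y) ∧
      (∀ e ∈ contractionKernel ω, ∀ s, e (Sum.elim x y s) = 0) ∧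
      ω = ∑ i, ι K (x i) * ι K (y i) := by
  by_cases h0 : ω = 0
  · exact ⟨0, Fin.elim0, Fin.elim0, linearIndependent_empty_type, fun _ _ s => by
      rcases s with s | s <;> exact s.elim0, by simp [h0]⟩
  obtain ⟨v, a, d, d', hv, ha, hdv, hda, hd'v, hd'a⟩ := exists_darboux_pair hω h0
  have hker (e : Module.Dual K M) (he : e ∈ contractionKernel ω) : e v = 0 ∧ e a = 0 :=
    ⟨apply_eq_zero_of_mem_contractionKernel hv he, apply_eq_zero_of_mem_contractionKernel ha he⟩
  set ω' := ω - ι K v * ι K a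
  have hω' : ω' ∈ ⋀[K]^2 M := sub_mem hω (ι_mul_ι_mem_exteriorPower_two_s5 v a)
  have hd : d ∈ contractionKernel ω' :=
    mem_contractionKernel_sub_ι_mul_ι.mpr (by simp [hv, hdv, hda])
  have hd' : d' ∈ contractionKernel ω' :=
    mem_contractionKernel_sub_ι_mul_ι.mpr (by simp [ha, hd'v, hd'a])
  have hle : contractionKernel ω ≤ contractionKernel ω' := fun e he =>
    mem_contractionKernel_sub_ι_mul_ι.mpr (by simp [mem_contractionKernel.mp he, hker e he])
  have hlt : contractionKernel ω < contractionKernel ω' :=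
    lt_of_le_of_ne hle fun h => by
      rw [← h, mem_contractionKernel, hv, ι_eq_zero_iff] at hd
      simp [hd] at hd'v
  have hrank := Submodule.finrank_lt_finrank_of_lt hlt
  have := (contractionKernel ω').finrank_le
  cases n with
  | zero => omega
  | succ n =>
    obtain ⟨m, x, y, hxy, hann, hsum⟩ := exists_darboux_of_finrank_le n hω' (by omega)
    refine ⟨m + 1, Fin.cons v x, Fin.cons a y, linearIndependent_sum_elim_fin_cons hxy
      (hann d hd) (hann d' hd') hdv (by simp [hda]) (by simp [hd'v]), ?_, ?_⟩
    · rintro e he ((_ | _) | (_ | _))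
      exacts [(hker e he).1, hann e (hle he) (.inl _), (hker e he).2, hann e (hle he) (.inr _)]
    · rw [Fin.sum_univ_succ, Fin.cons_zero, Fin.cons_zero]
      simp only [Fin.cons_succ, ← hsum, ω']
      abel

end Darboux

theorem exists_basis_symplecticForm_eq {K M : Type*} [Field K] [CharZero K] [AddCommGroup M]
    [Module K M] [FiniteDimensional K M] {p : ℕ} (hdim : Module.finrank K M = 2 * p)
    {ω : ExteriorAlgebra K M} (hω : ω ∈ ⋀[K]^2 M) (hωp : ω ^ p ≠ 0) :
    ∃ z : Module.Basis (Fin p ⊕ Fin p) K M, ω = symplecticForm z := by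
  obtain ⟨m, x, y, hxy, -, rfl⟩ := exists_darboux_of_finrank_le _ hω (Nat.le_add_left _ _)
  have hmp : m ≤ p := by
    have := hxy.fintype_card_le_finrank
    simp only [Fintype.card_sum, Fintype.card_fin, hdim] at this
    omega
  have hpm : p ≤ m := by
    by_contra! hlt
    exact hωp (pow_eq_zero_of_le hlt (sum_ι_mul_ι_pow_eq_zero x y))
  obtain rfl := le_antisymm hmp hpm
  refine ⟨basisOfLinearIndependentOfCardEqFinrank' _ hxy (by simp [hdim, two_mul]), ?_⟩
  simp [symplecticForm]

theorem statement5 (V : Type*) [AddCommGroup V] [Module ℝ V] [FiniteDimensional ℝ V]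
    (p : ℕ) (hdim : Module.finrank ℝ V = 2 * p)
    (ω : ⋀[ℝ]^2 (Module.Dual ℝ V))
    (hω : (ω : ExteriorAlgebra ℝ (Module.Dual ℝ V)) ^ p ≠ 0) :
    ∀ k : ℕ, k < p →
      Function.Injective (fun β : ⋀[ℝ]^k (Module.Dual ℝ V) =>
        (ω : ExteriorAlgebra ℝ (Module.Dual ℝ V)) * (β : ExteriorAlgebra ℝ (Module.Dual ℝ V))) := by
  intro k hk β₁ β₂ hβ
  obtain ⟨z, hz⟩ := exists_basis_symplecticForm_eq
    (by rw [Subspace.dual_finrank_eq, hdim]) ω.2 hω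
  refine Subtype.ext (sub_eq_zero.mp (eq_zero_of_symplecticForm_pow_mul_eq_zero z (r := 1)
    (by simpa using hk) (sub_mem β₁.2 β₂.2) ?_))
  rw [pow_one, ← hz, mul_sub, sub_eq_zero]
  exact hβ
end

section
/- Let V be a 4-dimensional real vector space and ω a nondegenerate alternating 2-form on V (i.e. ω ∧ ω ≠ 0). Then for every alternating 3-form κ on V there exists exactly one 1-form β on V such that κ = β ∧ ω. -/
set_option synthInstance.maxHeartbeats 1000000
set_option maxHeartbeats 1000000

/-!
STATEMENT 7: If `V` is a 4-dimensional real vector space and `ω` a nondegenerate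
alternating 2-form (`ω ∧ ω ≠ 0`), then for every alternating 3-form `κ` there is exactly
one 1-form `β` with `κ = β ∧ ω`.  Forms of degree `k` are modelled as elements of
`⋀[ℝ]^k (V^*)`; a 1-form `β : V^*` is embedded via `ExteriorAlgebra.ι ℝ β`, and the wedge
product is multiplication in the exterior algebra of the dual space.
-/
open Module ExteriorAlgebra Submodule

private lemma st7_anticomm {R M : Type*} [CommRing R] [AddCommGroup M] [Module R M] (x y : M) :
    ExteriorAlgebra.ι R x * ExteriorAlgebra.ι R y
      = -(ExteriorAlgebra.ι R y * ExteriorAlgebra.ι R x) :=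
  eq_neg_of_add_eq_zero_left (ExteriorAlgebra.ι_add_mul_swap x y)

/-- If `w` is a 2-vector with `w * w ≠ 0` then left multiplication by `ι β` is injective. -/
private lemma st7_key_inj {M : Type*} [AddCommGroup M] [Module ℝ M]
    (w : ExteriorAlgebra ℝ M) (hw : w ∈ ⋀[ℝ]^2 M)
    (hww : w * w ≠ 0) (β : M) (h : ExteriorAlgebra.ι ℝ β * w = 0) : β = 0 := by
  by_contra hβ
  obtain ⟨f, hf⟩ : ∃ f : Module.Dual ℝ M, f β ≠ 0 := by
    by_contra hc
    push_neg at hc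
    exact hβ ((Module.forall_dual_apply_eq_zero_iff ℝ β).mp hc)
  set d : Module.Dual ℝ M := (f β)⁻¹ • f with hd
  have hdβ : d β = 1 := by
    simp [hd, inv_mul_cancel₀ hf]
  have h2 : w ∈ LinearMap.range (ExteriorAlgebra.ι ℝ : M →ₗ[ℝ] ExteriorAlgebra ℝ M) *
      LinearMap.range (ExteriorAlgebra.ι ℝ : M →ₗ[ℝ] ExteriorAlgebra ℝ M) := by
    rw [show (⋀[ℝ]^2 M)
        = LinearMap.range (ExteriorAlgebra.ι ℝ : M →ₗ[ℝ] ExteriorAlgebra ℝ M) ^ 2 from rfl,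
      pow_two] at hw
    exact hw
  have hc : CliffordAlgebra.contractLeft (Q := (0 : QuadraticForm ℝ M)) d w ∈
      LinearMap.range (ExteriorAlgebra.ι ℝ : M →ₗ[ℝ] ExteriorAlgebra ℝ M) := by
    refine Submodule.mul_induction_on h2 ?_ ?_
    · rintro x ⟨u, rfl⟩ y ⟨v, rfl⟩
      rw [CliffordAlgebra.contractLeft_ι_mul, CliffordAlgebra.contractLeft_ι]
      refine sub_mem (Submodule.smul_mem _ _ ⟨v, rfl⟩) ?_
      rw [← Algebra.commutes, ← Algebra.smul_def]
      exact Submodule.smul_mem _ _ ⟨u, rfl⟩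
    · intro x y hx hy
      rw [map_add]
      exact add_mem hx hy
  obtain ⟨γ, hγ⟩ := hc
  have hwe : w = ExteriorAlgebra.ι ℝ β * ExteriorAlgebra.ι ℝ γ := by
    have h3 := CliffordAlgebra.contractLeft_ι_mul (Q := (0 : QuadraticForm ℝ M)) d β w
    rw [h, map_zero, hdβ, one_smul, ← hγ] at h3
    exact sub_eq_zero.mp h3.symm
  apply hww
  have hsw : ExteriorAlgebra.ι ℝ γ * ExteriorAlgebra.ι ℝ β
      = -(ExteriorAlgebra.ι ℝ β * ExteriorAlgebra.ι ℝ γ) := st7_anticomm γ β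
  calc w * w = ExteriorAlgebra.ι ℝ β * (ExteriorAlgebra.ι ℝ γ * ExteriorAlgebra.ι ℝ β)
        * ExteriorAlgebra.ι ℝ γ := by rw [hwe]; noncomm_ring
    _ = ExteriorAlgebra.ι ℝ β * (-(ExteriorAlgebra.ι ℝ β * ExteriorAlgebra.ι ℝ γ))
        * ExteriorAlgebra.ι ℝ γ := by rw [hsw]
    _ = -((ExteriorAlgebra.ι ℝ β * ExteriorAlgebra.ι ℝ β)
        * (ExteriorAlgebra.ι ℝ γ * ExteriorAlgebra.ι ℝ γ)) := by noncomm_ring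
    _ = 0 := by rw [ExteriorAlgebra.ι_sq_zero]; simp

theorem statement7 (V : Type*) [AddCommGroup V] [Module ℝ V] [FiniteDimensional ℝ V]
    (hdim : Module.finrank ℝ V = 4)
    (ω : ⋀[ℝ]^2 (Module.Dual ℝ V))
    (hω : (ω : ExteriorAlgebra ℝ (Module.Dual ℝ V)) * (ω : ExteriorAlgebra ℝ (Module.Dual ℝ V))
      ≠ 0) :
    ∀ κ : ⋀[ℝ]^3 (Module.Dual ℝ V),
      ∃! β : Module.Dual ℝ V,
        (κ : ExteriorAlgebra ℝ (Module.Dual ℝ V)) =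
          ExteriorAlgebra.ι ℝ β * (ω : ExteriorAlgebra ℝ (Module.Dual ℝ V)) := by
  classical
  set M := Module.Dual ℝ V with hM
  set E := ExteriorAlgebra ℝ M with hE
  set w : E := (ω : E) with hwdef
  have h4 : Module.finrank ℝ M = 4 := by
    show Module.finrank ℝ (Module.Dual ℝ V) = 4
    rw [Subspace.dual_finrank_eq, hdim]
  -- the multiplication map
  set L : M →ₗ[ℝ] E := (LinearMap.mulRight ℝ w).comp (ExteriorAlgebra.ι ℝ) with hL
  have hLapp : ∀ β : M, L β = ExteriorAlgebra.ι ℝ β * w := fun β => rfl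
  have hinj : Function.Injective L := by
    rw [← LinearMap.ker_eq_bot]
    rw [LinearMap.ker_eq_bot']
    intro β hβ
    exact st7_key_inj w ω.2 hω β hβ
  have hmem : ∀ β : M, ExteriorAlgebra.ι ℝ β * w ∈ ⋀[ℝ]^3 M := by
    intro β
    have : ExteriorAlgebra.ι ℝ β * w ∈
        LinearMap.range (ExteriorAlgebra.ι ℝ : M →ₗ[ℝ] E) *
          LinearMap.range (ExteriorAlgebra.ι ℝ : M →ₗ[ℝ] E) ^ 2 :=
      Submodule.mul_mem_mul ⟨β, rfl⟩ ω.2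
    rwa [← pow_succ'] at this
  -- spanning of the third exterior power
  set e : Basis (Fin 4) ℝ M := Module.finBasisOfFinrankEq ℝ M h4 with he
  set g : Fin 4 → E := ![ExteriorAlgebra.ι ℝ (e 0) * ExteriorAlgebra.ι ℝ (e 1) * ExteriorAlgebra.ι ℝ (e 2),
    ExteriorAlgebra.ι ℝ (e 0) * ExteriorAlgebra.ι ℝ (e 1) * ExteriorAlgebra.ι ℝ (e 3),
    ExteriorAlgebra.ι ℝ (e 0) * ExteriorAlgebra.ι ℝ (e 2) * ExteriorAlgebra.ι ℝ (e 3),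
    ExteriorAlgebra.ι ℝ (e 1) * ExteriorAlgebra.ι ℝ (e 2) * ExteriorAlgebra.ι ℝ (e 3)] with hg
  set S3 : Submodule ℝ E := Submodule.span ℝ (Set.range g) with hS3
  have sw12 : ∀ x y z : M, ExteriorAlgebra.ι ℝ x * ExteriorAlgebra.ι ℝ y * ExteriorAlgebra.ι ℝ z
      = -(ExteriorAlgebra.ι ℝ y * ExteriorAlgebra.ι ℝ x * ExteriorAlgebra.ι ℝ z) := by
    intro x y z; rw [st7_anticomm x y, neg_mul]
  have sw23 : ∀ x y z : M, ExteriorAlgebra.ι ℝ x * ExteriorAlgebra.ι ℝ y * ExteriorAlgebra.ι ℝ z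
      = -(ExteriorAlgebra.ι ℝ x * ExteriorAlgebra.ι ℝ z * ExteriorAlgebra.ι ℝ y) := by
    intro x y z; rw [mul_assoc, st7_anticomm y z, mul_neg, mul_assoc]
  have sorted : ∀ i j k : Fin 4, i < j → j < k →
      ExteriorAlgebra.ι ℝ (e i) * ExteriorAlgebra.ι ℝ (e j) * ExteriorAlgebra.ι ℝ (e k) ∈ S3 := by
    intro i j k hij hjk
    have hcl : ∀ i j k : Fin 4, i < j → j < k →
        (i, j, k) = ((0 : Fin 4), (1 : Fin 4), (2 : Fin 4)) ∨ (i, j, k) = (0, 1, 3) ∨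
        (i, j, k) = (0, 2, 3) ∨ (i, j, k) = (1, 2, 3) := by decide
    rcases hcl i j k hij hjk with h|h|h|h <;>
      (rw [Prod.mk.injEq, Prod.mk.injEq] at h; obtain ⟨rfl, rfl, rfl⟩ := h)
    · exact Submodule.subset_span ⟨0, rfl⟩
    · exact Submodule.subset_span ⟨1, rfl⟩
    · exact Submodule.subset_span ⟨2, rfl⟩
    · exact Submodule.subset_span ⟨3, rfl⟩
  have step : ∀ a b c : Fin 4, a < b →
      ExteriorAlgebra.ι ℝ (e a) * ExteriorAlgebra.ι ℝ (e b) * ExteriorAlgebra.ι ℝ (e c) ∈ S3 := by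
    intro a b c hab
    rcases lt_trichotomy b c with hbc|rfl|hcb
    · exact sorted a b c hab hbc
    · rw [mul_assoc, ExteriorAlgebra.ι_sq_zero, mul_zero]; exact zero_mem _
    · rcases lt_trichotomy a c with hac|rfl|hca
      · rw [sw23]; exact neg_mem (sorted a c b hac hcb)
      · rw [sw23, ExteriorAlgebra.ι_sq_zero, zero_mul, neg_zero]
        exact zero_mem _
      · rw [sw23 (e a) (e b) (e c), sw12 (e a) (e c) (e b), neg_neg]
        exact sorted c a b hca hab
  have main : ∀ a b c : Fin 4,
      ExteriorAlgebra.ι ℝ (e a) * ExteriorAlgebra.ι ℝ (e b) * ExteriorAlgebra.ι ℝ (e c) ∈ S3 := by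
    intro a b c
    rcases lt_trichotomy a b with hab|rfl|hba
    · exact step a b c hab
    · rw [ExteriorAlgebra.ι_sq_zero, zero_mul]; exact zero_mem _
    · rw [sw12]; exact neg_mem (step b a c hba)
  have hrange : LinearMap.range (ExteriorAlgebra.ι ℝ : M →ₗ[ℝ] E)
      = Submodule.span ℝ (Set.range fun i => ExteriorAlgebra.ι ℝ (e i)) := by
    rw [LinearMap.range_eq_map, ← Basis.span_eq e, Submodule.map_span, ← Set.range_comp]
    rfl
  have h3le : (⋀[ℝ]^3 M : Submodule ℝ E) ≤ S3 := by
    show LinearMap.range (ExteriorAlgebra.ι ℝ : M →ₗ[ℝ] E) ^ 3 ≤ S3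
    rw [hrange, pow_succ, pow_succ, pow_one, Submodule.span_mul_span, Submodule.span_mul_span,
      Submodule.span_le]
    rintro x ⟨y, ⟨p, ⟨i, rfl⟩, q, ⟨j, rfl⟩, rfl⟩, c, ⟨k, rfl⟩, rfl⟩
    exact main i j k
  have hfd : FiniteDimensional ℝ S3 :=
    FiniteDimensional.span_of_finite ℝ (Set.finite_range g)
  have hfd3 : FiniteDimensional ℝ (⋀[ℝ]^3 M : Submodule ℝ E) :=
    Submodule.finiteDimensional_of_le h3le
  have hle4 : Module.finrank ℝ (⋀[ℝ]^3 M : Submodule ℝ E) ≤ 4 := by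
    calc Module.finrank ℝ (⋀[ℝ]^3 M : Submodule ℝ E) ≤ Module.finrank ℝ S3 :=
          Submodule.finrank_mono h3le
      _ ≤ 4 := by
          have := finrank_range_le_card (R := ℝ) g
          simpa [Set.finrank] using this
  have hrangeL : LinearMap.range L ≤ (⋀[ℝ]^3 M : Submodule ℝ E) := by
    rintro x ⟨β, rfl⟩
    exact hmem β
  have hfr : Module.finrank ℝ (LinearMap.range L) = 4 := by
    rw [LinearMap.finrank_range_of_inj hinj, h4]
  have heq : LinearMap.range L = (⋀[ℝ]^3 M : Submodule ℝ E) :=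
    Submodule.eq_of_le_of_finrank_le hrangeL (by rw [hfr]; exact hle4)
  intro κ
  have hκ : (κ : E) ∈ LinearMap.range L := by rw [heq]; exact κ.2
  obtain ⟨β, hβ⟩ := hκ
  refine ⟨β, hβ.symm, ?_⟩
  intro β' hβ'
  have hz : ExteriorAlgebra.ι ℝ (β' - β) * w = 0 := by
    rw [map_sub, sub_mul]
    rw [hLapp] at hβ
    rw [← hβ', hβ, sub_self]
  have := st7_key_inj w ω.2 hω (β' - β) hz
  exact sub_eq_zero.mp this
end

section
/- Let U be an open subset of ℝⁿ with n ≥ 4, ω a smooth differential 2-form on U and β a smooth differential 1-form on U with dω = β ∧ ω. Then at every point x ∈ U where ω(x) ∧ ω(x) ∧ ω(x) ≠ 0 (i.e. where the rank of ω exceeds 2), the exterior derivative dβ vanishes: (dβ)(x) = 0. In particular, the set of points where the rank of ω exceeds 2 is open and dβ = 0 on it. -/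
set_option synthInstance.maxHeartbeats 1000000
set_option maxHeartbeats 1000000

noncomputable section

open ExteriorAlgebra

/-! ### Preamble: differential forms on open subsets of `ℝⁿ`

A (inhomogeneous) differential form on (an open subset of) `ℝⁿ` is modelled as a map from
`ℝⁿ = Fin n → ℝ` into the exterior algebra `ExteriorAlgebra ℝ (Module.Dual ℝ (Fin n → ℝ))`
of the dual space; a differential `k`-form takes values in the `k`-th exterior power
`⋀[ℝ]^k (Module.Dual ℝ (Fin n → ℝ))`.  The wedge product is multiplication in the exterior
algebra.  To speak about continuity and differentiability we endow this (finite-dimensional)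
exterior algebra with a norm, induced by a linear equivalence with `ℝ^d`; all norms on a
finite-dimensional real vector space are equivalent, so the resulting notions of continuous
and smooth differential forms do not depend on this choice.  The exterior derivative is
defined by the classical coordinate formula `dω = ∑ᵢ dxⁱ ∧ ∂ᵢω`. -/

/-- The `i`-th exterior power of a finite-dimensional space vanishes for `i` larger
than the dimension. -/
theorem exteriorPower_eq_bot_of_finrank_lt {V : Type*} [AddCommGroup V] [Module ℝ V]
    [FiniteDimensional ℝ V] {i : ℕ} (hi : Module.finrank ℝ V < i) :
    ⋀[ℝ]^i V = ⊥ := by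
  rw [← ιMulti_span_fixedDegree, Submodule.span_eq_bot]
  rintro x ⟨v, rfl⟩
  refine AlternatingMap.map_linearDependent _ v (fun h => ?_)
  have := h.fintype_card_le_finrank
  simp only [Fintype.card_fin] at this
  omega

/-- The exterior algebra of a finite-dimensional real vector space is finite-dimensional. -/
instance instFiniteExteriorAlgebra {V : Type*} [AddCommGroup V] [Module ℝ V]
    [FiniteDimensional ℝ V] : Module.Finite ℝ (ExteriorAlgebra ℝ V) := by
  classical
  rw [Module.finite_def]
  set m := Module.finrank ℝ V
  have hfg : ∀ i : ℕ, (⋀[ℝ]^i V).FG := by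
    intro i
    induction i with
    | zero =>
      rw [exteriorPower, pow_zero, Submodule.one_eq_span]
      exact Submodule.fg_span_singleton _
    | succ j ih =>
      rw [exteriorPower, pow_succ]
      exact Submodule.FG.mul ih
        (by rw [← Submodule.map_top]; exact Submodule.FG.map _ Module.Finite.fg_top)
  set F : Submodule ℝ (ExteriorAlgebra ℝ V) := ∑ i ∈ Finset.range (m + 1), ⋀[ℝ]^i V with hF
  have hFfg : F.FG := by
    rw [hF]
    classical
    induction (Finset.range (m + 1)) using Finset.cons_induction with
    | empty => simpa using Submodule.fg_bot
    | cons a s ha ih =>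
      rw [Finset.sum_cons, Submodule.add_eq_sup]
      exact Submodule.FG.sup (hfg a) ih
  have hle : ∀ i : ℕ, ⋀[ℝ]^i V ≤ F := by
    intro i
    by_cases h : i ≤ m
    · exact Finset.single_le_sum (f := fun i => ⋀[ℝ]^i V) (fun j _ => bot_le)
        (Finset.mem_range.2 (by omega))
    · rw [exteriorPower_eq_bot_of_finrank_lt (by omega)]
      exact bot_le
  have htop : (⊤ : Submodule ℝ (ExteriorAlgebra ℝ V)) ≤ F := by
    intro x _
    rw [← DirectSum.sum_support_decompose (fun i : ℕ => ⋀[ℝ]^i V) x]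
    exact Submodule.sum_mem _ fun i _ => hle i (DirectSum.decompose (fun i : ℕ => ⋀[ℝ]^i V) x i).2
  exact top_le_iff.mp htop ▸ hFfg

/-- The algebra of (inhomogeneous) exterior forms on `ℝⁿ`: the exterior algebra of the
dual space of `ℝⁿ`.  A `k`-form on `ℝⁿ` is an element of the submodule
`⋀[ℝ]^k (Module.Dual ℝ (Fin n → ℝ))`. -/
abbrev FormAlgebra (n : ℕ) : Type := ExteriorAlgebra ℝ (Module.Dual ℝ (Fin n → ℝ))

/-- A norm on the (finite-dimensional) algebra of exterior forms on `ℝⁿ`, transported from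
`ℝ^d` by a linear equivalence.  All norms on a finite-dimensional real space are equivalent,
so continuity/smoothness of form-valued maps does not depend on this choice. -/
instance instNormedFormAlgebra (n : ℕ) : NormedAddCommGroup (FormAlgebra n) :=
  NormedAddCommGroup.induced _ _ ((Module.finBasis ℝ (FormAlgebra n)).equivFun.toLinearMap)
    (Module.finBasis ℝ (FormAlgebra n)).equivFun.injective

instance instNormedSpaceFormAlgebra (n : ℕ) : NormedSpace ℝ (FormAlgebra n) :=
  NormedSpace.induced ℝ _ _ ((Module.finBasis ℝ (FormAlgebra n)).equivFun.toLinearMap)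

/-- The coordinate 1-forms `dxⁱ` on `ℝⁿ`. -/
def dx {n : ℕ} (i : Fin n) : FormAlgebra n := ExteriorAlgebra.ι ℝ (LinearMap.proj i)

/-- The exterior derivative of a form-valued map on `ℝⁿ`, via the classical coordinate
formula `dω = ∑ᵢ dxⁱ ∧ ∂ᵢω` (where `∂ᵢ` is the partial derivative in the direction of the
`i`-th standard basis vector). -/
def extDerivCoord {n : ℕ} (ω : (Fin n → ℝ) → FormAlgebra n) (x : Fin n → ℝ) : FormAlgebra n :=
  ∑ i : Fin n, dx i * fderiv ℝ ω x (Pi.single i 1)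

end

/-!
Applying `d` to `dω = β ∧ ω` and using `d ∘ d = 0` gives `0 = dβ ∧ ω - β ∧ β ∧ ω = dβ ∧ ω`, so
everything reduces to linear algebra: a 2-vector `θ` with `θ ∧ Ω = 0` vanishes as soon as
`Ω ∧ Ω ∧ Ω ≠ 0`. Contracting `θ ∧ Ω ∧ Ω = 0` with a covector `d` gives `(d ⌋ θ) ∧ Ω ∧ Ω = 0`,
because 2-vectors are central. Contracting this once more with `e` and wedging with `Ω` leaves
`e (d ⌋ θ) • Ω³ = 0`, so every contraction `d ⌋ θ` vanishes, and hence so does `θ` by Euler's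
formula `∑ᵢ eᵢ ∧ (eᵢ* ⌋ θ) = 2 θ`. Openness is continuity of `x ↦ ω(x)³`.
-/

open ExteriorAlgebra Topology

namespace ExteriorAlgebra

open CliffordAlgebra (contractLeft)

section CommRing

variable {R V : Type*} [CommRing R] [AddCommGroup V] [Module R V]

theorem mem_exteriorPower_one_iff {x : ExteriorAlgebra R V} :
    x ∈ ⋀[R]^1 V ↔ ∃ φ : V, ι R φ = x := by
  rw [exteriorPower, pow_one, LinearMap.mem_range]

@[elab_as_elim]
theorem mem_exteriorPower_two_induction {P : ExteriorAlgebra R V → Prop}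
    {θ : ExteriorAlgebra R V} (hθ : θ ∈ ⋀[R]^2 V)
    (add : ∀ x y, P x → P y → P (x + y)) (ι_mul_ι : ∀ a b : V, P (ι R a * ι R b)) : P θ := by
  rw [exteriorPower, pow_two] at hθ
  exact Submodule.mul_induction_on hθ (by rintro _ ⟨a, rfl⟩ _ ⟨b, rfl⟩; exact ι_mul_ι a b) add

theorem ι_mul_ι_eq_neg (a b : V) : ι R a * ι R b = -(ι R b * ι R a) :=
  eq_neg_of_add_eq_zero_left (ι_add_mul_swap a b)

theorem commute_of_mem_exteriorPower_two_s11 {θ : ExteriorAlgebra R V} (hθ : θ ∈ ⋀[R]^2 V)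
    (y : ExteriorAlgebra R V) : Commute θ y := by
  refine mem_exteriorPower_two_induction hθ (fun _ _ => Commute.add_left) (fun a b => ?_)
  induction y using CliffordAlgebra.induction with
  | algebraMap r => exact Algebra.commute_algebraMap_right r _
  | ι m =>
    rw [Commute, SemiconjBy, mul_assoc, ι_mul_ι_eq_neg b m, mul_neg, ← mul_assoc,
      ι_mul_ι_eq_neg a m, neg_mul, neg_neg, mul_assoc]
  | mul x y hx hy => exact hx.mul_right hy
  | add x y hx hy => exact hx.add_right hy

theorem contractLeft_ι_mul_ι (d : Module.Dual R V) (a b : V) :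
    contractLeft d (ι R a * ι R b) = ι R (d a • b - d b • a) := by
  rw [CliffordAlgebra.contractLeft_ι_mul, CliffordAlgebra.contractLeft_ι, map_sub, map_smul,
    map_smul, ← Algebra.commutes, ← Algebra.smul_def]

theorem exists_contractLeft_eq_ι {θ : ExteriorAlgebra R V} (hθ : θ ∈ ⋀[R]^2 V)
    (d : Module.Dual R V) : ∃ φ : V, contractLeft d θ = ι R φ := by
  refine mem_exteriorPower_two_induction hθ ?_ (fun a b => ⟨_, contractLeft_ι_mul_ι d a b⟩)
  rintro x y ⟨φ, hφ⟩ ⟨ψ, hψ⟩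
  exact ⟨φ + ψ, by rw [map_add, hφ, hψ, map_add]⟩

theorem contractLeft_mul_of_mem_exteriorPower_two {θ : ExteriorAlgebra R V}
    (hθ : θ ∈ ⋀[R]^2 V) (d : Module.Dual R V) (y : ExteriorAlgebra R V) :
    contractLeft d (θ * y) = contractLeft d θ * y + θ * contractLeft d y := by
  refine mem_exteriorPower_two_induction hθ (fun x z hx hz => ?_) (fun a b => ?_)
  · rw [add_mul, map_add, hx, hz, map_add]
    noncomm_ring
  · rw [mul_assoc, CliffordAlgebra.contractLeft_ι_mul, contractLeft_ι_mul_ι,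
      CliffordAlgebra.contractLeft_ι_mul, mul_sub, map_sub, map_smul, map_smul]
    simp only [sub_mul, smul_mul_assoc, mul_smul_comm, mul_assoc]
    abel

theorem sum_ι_mul_contractLeft {κ : Type*} [Fintype κ] (b : Module.Basis κ R V)
    {θ : ExteriorAlgebra R V} (hθ : θ ∈ ⋀[R]^2 V) :
    ∑ i, ι R (b i) * contractLeft (b.coord i) θ = (2 : R) • θ := by
  have sum_coord_smul (v : V) : ∑ i, b.coord i v • ι R (b i) = ι R v := by
    simp_rw [← map_smul, ← map_sum, Module.Basis.coord_apply, b.sum_repr]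
  refine mem_exteriorPower_two_induction hθ (fun x y hx hy => ?_) (fun a c => ?_)
  · simp only [map_add, mul_add, Finset.sum_add_distrib, hx, hy, smul_add]
  · simp only [contractLeft_ι_mul_ι, map_sub, map_smul, mul_sub, mul_smul_comm,
      Finset.sum_sub_distrib, ← smul_mul_assoc, ← Finset.sum_mul, sum_coord_smul]
    rw [ι_mul_ι_eq_neg c a, sub_neg_eq_add, two_smul, add_mul]

theorem sum_ι_mul_ι_mul_eq_zero [Invertible (2 : R)] {κ : Type*} [Fintype κ] (v : κ → V)
    (H : κ → κ → ExteriorAlgebra R V) (hH : ∀ i j, H i j = H j i) :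
    ∑ i, ∑ j, ι R (v i) * (ι R (v j) * H i j) = 0 := by
  have swap (i j : κ) :
      ι R (v j) * (ι R (v i) * H j i) = -(ι R (v i) * (ι R (v j) * H i j)) := by
    rw [← mul_assoc, ι_mul_ι_eq_neg, neg_mul, mul_assoc, hH]
  have hS : ∑ i, ∑ j, ι R (v i) * (ι R (v j) * H i j)
      = -∑ i, ∑ j, ι R (v i) * (ι R (v j) * H i j) := by
    conv_lhs => rw [Finset.sum_comm]
    simp only [← Finset.sum_neg_distrib]
    exact Finset.sum_congr rfl fun i _ => Finset.sum_congr rfl fun j _ => swap i j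
  refine (isUnit_of_invertible (2 : R)).smul_eq_zero.mp ?_
  rw [two_smul]
  exact add_eq_zero_iff_eq_neg.mpr hS

theorem eq_zero_of_forall_contractLeft_eq_zero [Invertible (2 : R)] [Module.Free R V]
    [Module.Finite R V] {θ : ExteriorAlgebra R V} (hθ : θ ∈ ⋀[R]^2 V)
    (h : ∀ d : Module.Dual R V, contractLeft d θ = 0) : θ = 0 := by
  have h2θ := sum_ι_mul_contractLeft (Module.Free.chooseBasis R V) hθ
  simp only [h, mul_zero, Finset.sum_const_zero] at h2θ
  exact (isUnit_of_invertible (2 : R)).smul_eq_zero.mp h2θ.symm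

end CommRing

section Field

variable {K V : Type*} [Field K] [AddCommGroup V] [Module K V]

theorem eq_zero_of_ι_mul_mul_self_eq_zero {Ω : ExteriorAlgebra K V} (hΩ : Ω ∈ ⋀[K]^2 V)
    (hΩ3 : Ω * Ω * Ω ≠ 0) {φ : V} (h : ι K φ * (Ω * Ω) = 0) : φ = 0 := by
  rw [← Module.forall_dual_apply_eq_zero_iff K]
  intro e
  obtain ⟨ψ, hψ⟩ := exists_contractLeft_eq_ι hΩ e
  have hcontr : e φ • (Ω * Ω) = ι K φ * (ι K ψ * Ω + Ω * ι K ψ) := by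
    have := congrArg (contractLeft e) h
    rwa [CliffordAlgebra.contractLeft_ι_mul, map_zero, contractLeft_mul_of_mem_exteriorPower_two hΩ,
      hψ, sub_eq_zero] at this
  have hvanish : ι K φ * (ι K ψ * Ω) * Ω = 0 := by
    rw [← mul_assoc, ι_mul_ι_eq_neg, neg_mul, neg_mul, mul_assoc, mul_assoc, h, mul_zero, neg_zero]
  have : e φ • (Ω * Ω * Ω) = 0 := by
    rw [← smul_mul_assoc, hcontr, mul_add, add_mul, hvanish,
      (commute_of_mem_exteriorPower_two_s11 hΩ _).eq, hvanish, add_zero]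
  exact (smul_eq_zero.mp this).resolve_right hΩ3

theorem eq_zero_of_mul_eq_zero_of_pow_three_ne_zero [FiniteDimensional K V] [Invertible (2 : K)]
    {θ Ω : ExteriorAlgebra K V} (hθ : θ ∈ ⋀[K]^2 V) (hΩ : Ω ∈ ⋀[K]^2 V) (h : θ * Ω = 0)
    (hΩ3 : Ω ^ 3 ≠ 0) : θ = 0 := by
  rw [pow_three'] at hΩ3
  refine eq_zero_of_forall_contractLeft_eq_zero hθ fun d => ?_
  obtain ⟨φ, hφ⟩ := exists_contractLeft_eq_ι hθ d
  obtain ⟨ψ, hψ⟩ := exists_contractLeft_eq_ι hΩ d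
  suffices ι K φ * (Ω * Ω) = 0 by rw [hφ, eq_zero_of_ι_mul_mul_self_eq_zero hΩ hΩ3 this, map_zero]
  have e1 : θ * (ι K ψ * Ω) = 0 := by
    rw [← mul_assoc, (commute_of_mem_exteriorPower_two_s11 hθ _).eq, mul_assoc, h, mul_zero]
  have e2 : θ * (Ω * ι K ψ) = 0 := by rw [← mul_assoc, h, zero_mul]
  have := congrArg (contractLeft d) (show θ * (Ω * Ω) = 0 by rw [← mul_assoc, h, zero_mul])
  rwa [contractLeft_mul_of_mem_exteriorPower_two hθ, contractLeft_mul_of_mem_exteriorPower_two hΩ,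
    hψ, hφ, map_zero, mul_add, e1, e2, add_zero, add_zero] at this

end Field

end ExteriorAlgebra

theorem fderiv_apply_mem_of_eventually_mem {𝕜 E F : Type*} [NontriviallyNormedField 𝕜]
    [NormedAddCommGroup E] [NormedSpace 𝕜 E] [NormedAddCommGroup F] [NormedSpace 𝕜 F]
    {p : Submodule 𝕜 F} (hp : IsClosed (p : Set F)) {f : E → F} {x : E}
    (hf : ∀ᶠ y in 𝓝 x, f y ∈ p) (v : E) : fderiv 𝕜 f x v ∈ p := by
  by_cases hd : DifferentiableAt 𝕜 f x
  · have h1 : HasFDerivAt (p.mkQL ∘ f) (p.mkQL.comp (fderiv 𝕜 f x)) x :=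
      p.mkQL.hasFDerivAt.comp x hd.hasFDerivAt
    have h0 : HasFDerivAt (p.mkQL ∘ f) (0 : E →L[𝕜] F ⧸ p) x :=
      (hasFDerivAt_const (0 : F ⧸ p) x).congr_of_eventuallyEq
        (hf.mono fun y hy => (Submodule.Quotient.mk_eq_zero p).2 hy)
    simpa using congrArg (· v) (h1.unique h0)
  · rw [fderiv_zero_of_not_differentiableAt hd]
    exact p.zero_mem

namespace FormAlgebra

variable {n : ℕ}

noncomputable def mulL : FormAlgebra n →L[ℝ] FormAlgebra n →L[ℝ] FormAlgebra n :=
  LinearMap.toContinuousLinearMap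
    (LinearMap.toContinuousLinearMap.toLinearMap ∘ₗ LinearMap.mul ℝ (FormAlgebra n))

@[simp]
theorem mulL_apply (a b : FormAlgebra n) : mulL a b = a * b := rfl

instance : ContinuousMul (FormAlgebra n) :=
  ⟨mulL.isBoundedBilinearMap.continuous⟩

theorem fderiv_mul_apply {E : Type*} [NormedAddCommGroup E] [NormedSpace ℝ E]
    {f g : E → FormAlgebra n} {x : E} (hf : DifferentiableAt ℝ f x) (hg : DifferentiableAt ℝ g x)
    (v : E) : fderiv ℝ (fun y => f y * g y) x v = fderiv ℝ f x v * g x + f x * fderiv ℝ g x v := by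
  simp [← mulL_apply, mulL.fderiv_of_bilinear hf hg, add_comm]

end FormAlgebra

section ExteriorDerivative

variable {n : ℕ}

noncomputable def extDerivCoordL : ((Fin n → ℝ) →L[ℝ] FormAlgebra n) →L[ℝ] FormAlgebra n :=
  ∑ i, (FormAlgebra.mulL (dx i)).comp (ContinuousLinearMap.apply ℝ (FormAlgebra n) (Pi.single i 1))

theorem extDerivCoord_eq_comp (ω : (Fin n → ℝ) → FormAlgebra n) :
    extDerivCoord ω = extDerivCoordL ∘ fderiv ℝ ω := by
  ext x
  simp [extDerivCoord, extDerivCoordL]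

theorem extDerivCoord_congr {f g : (Fin n → ℝ) → FormAlgebra n} {x : Fin n → ℝ}
    (h : f =ᶠ[𝓝 x] g) : extDerivCoord f x = extDerivCoord g x := by
  simp only [extDerivCoord, h.fderiv_eq]

theorem fderiv_extDerivCoord_apply {ω : (Fin n → ℝ) → FormAlgebra n} {x : Fin n → ℝ}
    (hω : DifferentiableAt ℝ (fderiv ℝ ω) x) (v : Fin n → ℝ) :
    fderiv ℝ (extDerivCoord ω) x v = ∑ i, dx i * fderiv ℝ (fderiv ℝ ω) x v (Pi.single i 1) := by
  rw [extDerivCoord_eq_comp, (extDerivCoordL.hasFDerivAt.comp x hω.hasFDerivAt).fderiv]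
  simp [extDerivCoordL]

theorem extDerivCoord_extDerivCoord {ω : (Fin n → ℝ) → FormAlgebra n} {x : Fin n → ℝ}
    (hω : ContDiffAt ℝ 2 ω x) : extDerivCoord (extDerivCoord ω) x = 0 := by
  have hdiff : DifferentiableAt ℝ (fderiv ℝ ω) x :=
    (hω.fderiv_right le_rfl).differentiableAt one_ne_zero
  have hsymm := hω.isSymmSndFDerivAt (by simp [minSmoothness_of_isRCLikeNormedField])
  simp only [extDerivCoord, fderiv_extDerivCoord_apply hdiff, Finset.mul_sum]
  exact sum_ι_mul_ι_mul_eq_zero _ _ fun i j => hsymm _ _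

theorem extDerivCoord_mul_of_mem_exteriorPower_one {β ω : (Fin n → ℝ) → FormAlgebra n}
    {x : Fin n → ℝ} (hβ : DifferentiableAt ℝ β x) (hω : DifferentiableAt ℝ ω x)
    (hβ1 : β x ∈ ⋀[ℝ]^1 (Module.Dual ℝ (Fin n → ℝ))) :
    extDerivCoord (fun y => β y * ω y) x = extDerivCoord β x * ω x - β x * extDerivCoord ω x := by
  obtain ⟨φ, hφ⟩ := mem_exteriorPower_one_iff.mp hβ1
  simp only [extDerivCoord, FormAlgebra.fderiv_mul_apply hβ hω, mul_add, Finset.sum_add_distrib,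
    Finset.sum_mul, Finset.mul_sum, sub_eq_add_neg, ← Finset.sum_neg_distrib, ← mul_assoc]
  congr 1
  refine Finset.sum_congr rfl fun i _ => ?_
  rw [← hφ, dx, ι_mul_ι_eq_neg, neg_mul]

theorem extDerivCoord_mem_exteriorPower_two {β : (Fin n → ℝ) → FormAlgebra n} {x : Fin n → ℝ}
    (hβ1 : ∀ᶠ y in 𝓝 x, β y ∈ ⋀[ℝ]^1 (Module.Dual ℝ (Fin n → ℝ))) :
    extDerivCoord β x ∈ ⋀[ℝ]^2 (Module.Dual ℝ (Fin n → ℝ)) :=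
  Submodule.sum_mem _ fun _ _ => SetLike.mul_mem_graded (mem_exteriorPower_one_iff.mpr ⟨_, rfl⟩)
    (fderiv_apply_mem_of_eventually_mem (Submodule.closed_of_finiteDimensional _) hβ1 _)

end ExteriorDerivative

theorem statement11_general (n : ℕ) (U : Set (Fin n → ℝ)) (hU : IsOpen U)
    (ω β : (Fin n → ℝ) → FormAlgebra n)
    (hω2 : ∀ x ∈ U, ω x ∈ ⋀[ℝ]^2 (Module.Dual ℝ (Fin n → ℝ)))
    (hβ1 : ∀ x ∈ U, β x ∈ ⋀[ℝ]^1 (Module.Dual ℝ (Fin n → ℝ)))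
    (hωs : ContDiffOn ℝ (⊤ : ℕ∞) ω U) (hβs : ContDiffOn ℝ (⊤ : ℕ∞) β U)
    (heq : ∀ x ∈ U, extDerivCoord ω x = β x * ω x) :
    (∀ x ∈ U, ω x ^ 3 ≠ 0 → extDerivCoord β x = 0) ∧
    IsOpen {x | x ∈ U ∧ ω x ^ 3 ≠ 0} := by
  refine ⟨fun x hx hx3 => ?_,
    (hωs.continuousOn.pow 3).isOpen_inter_preimage hU isOpen_compl_singleton⟩
  have hUx : U ∈ 𝓝 x := hU.mem_nhds hx
  have hβd : DifferentiableAt ℝ β x := (hβs.contDiffAt hUx).differentiableAt (by norm_cast)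
  have hωd : DifferentiableAt ℝ ω x := (hωs.contDiffAt hUx).differentiableAt (by norm_cast)
  have hω2x : ContDiffAt ℝ 2 ω x := (hωs.contDiffAt hUx).of_le (WithTop.coe_le_coe.mpr le_top)
  obtain ⟨φ, hφ⟩ := mem_exteriorPower_one_iff.mp (hβ1 x hx)
  have hdβω : extDerivCoord β x * ω x = 0 := by
    have hddω := extDerivCoord_extDerivCoord hω2x
    rwa [extDerivCoord_congr (Filter.eventually_of_mem hUx heq),
      extDerivCoord_mul_of_mem_exteriorPower_one hβd hωd (hβ1 x hx), heq x hx, ← mul_assoc, ← hφ,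
      ι_sq_zero, zero_mul, sub_zero] at hddω
  exact eq_zero_of_mul_eq_zero_of_pow_three_ne_zero
    (extDerivCoord_mem_exteriorPower_two (Filter.eventually_of_mem hUx hβ1)) (hω2 x hx) hdβω hx3

theorem statement11 (n : ℕ) (hn : 4 ≤ n) (U : Set (Fin n → ℝ)) (hU : IsOpen U)
    (ω β : (Fin n → ℝ) → FormAlgebra n)
    (hω2 : ∀ x ∈ U, ω x ∈ ⋀[ℝ]^2 (Module.Dual ℝ (Fin n → ℝ)))
    (hβ1 : ∀ x ∈ U, β x ∈ ⋀[ℝ]^1 (Module.Dual ℝ (Fin n → ℝ)))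
    (hωs : ContDiffOn ℝ (⊤ : ℕ∞) ω U) (hβs : ContDiffOn ℝ (⊤ : ℕ∞) β U)
    (heq : ∀ x ∈ U, extDerivCoord ω x = β x * ω x) :
    (∀ x ∈ U, ω x ^ 3 ≠ 0 → extDerivCoord β x = 0) ∧
    IsOpen {x | x ∈ U ∧ ω x ^ 3 ≠ 0} :=
  statement11_general n U hU ω β hω2 hβ1 hωs hβs heq
end

section
/- On ℝ⁴ with coordinates (x¹, x², y¹, y²), define the smooth 2-form ω₀ = e^{x¹y¹ + x²y²} dx¹ ∧ dx² + dy¹ ∧ dy² and the smooth 1-form β₀ = x¹ dy¹ + x² dy². Then: (i) dω₀ = β₀ ∧ ω₀; (ii) dβ₀ = dx¹ ∧ dy¹ + dx² ∧ dy², which is nonzero at every point; and (iii) dβ₀ ∧ ω₀ = 0 at every point. In particular, in dimension 4 the equation dω = β ∧ ω with ω nondegenerate does not force dβ = 0. -/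
set_option synthInstance.maxHeartbeats 1000000
set_option maxHeartbeats 1000000

noncomputable section

open ExteriorAlgebra

/-- The exterior derivative of a form-valued map on `ℝⁿ`, via the classical coordinate
formula `dω = ∑ᵢ dxⁱ ∧ ∂ᵢω` (where `∂ᵢ` is the partial derivative in the direction of the
`i`-th standard basis vector). -/
def extDeriv' {n : ℕ} (ω : (Fin n → ℝ) → FormAlgebra n) (x : Fin n → ℝ) : FormAlgebra n :=
  ∑ i : Fin n, dx i * fderiv ℝ ω x (Pi.single i 1)

end

/-- The 2-form `ω₀ = e^{x¹y¹ + x²y²} dx¹ ∧ dx² + dy¹ ∧ dy²` on `ℝ⁴`, with coordinates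
`(x¹, x², y¹, y²) = (v 0, v 1, v 2, v 3)`. -/
noncomputable def ω₀ : (Fin 4 → ℝ) → FormAlgebra 4 := fun v =>
  Real.exp (v 0 * v 2 + v 1 * v 3) • (dx 0 * dx 1) + dx 2 * dx 3

/-- The 1-form `β₀ = x¹ dy¹ + x² dy²` on `ℝ⁴`. -/
noncomputable def β₀ : (Fin 4 → ℝ) → FormAlgebra 4 := fun v =>
  v 0 • dx 2 + v 1 • dx 3

/-!
Write `φ = x¹y¹ + x²y²`. Both forms are sums `∑ fₖ cₖ` of functions times constant forms, so
`d(∑ fₖ cₖ) = ∑ dfₖ ∧ cₖ`. Hence `dω₀ = e^φ dφ ∧ dx¹ ∧ dx²`, and in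
`dφ = x¹ dy¹ + y¹ dx¹ + x² dy² + y² dx²` the `dx`-terms die against `dx¹ ∧ dx²`, leaving
`e^φ β₀ ∧ dx¹ ∧ dx² = β₀ ∧ ω₀` because `β₀ ∧ dy¹ ∧ dy² = 0`. The remaining claims are about
products of four coordinate 1-forms, which vanish exactly when an index repeats: a product of
distinct ones pairs to a determinant `1` with the corresponding evaluation functionals.
-/

open ExteriorAlgebra

namespace ExteriorAlgebra

variable {R M : Type*} [CommRing R] [AddCommGroup M] [Module R M]

theorem ι_mul_ι_anticomm_s16 (x y : M) : ι R x * ι R y = -(ι R y * ι R x) :=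
  eq_neg_of_add_eq_zero_left (ι_add_mul_swap x y)

theorem ι_mul_ι_mul_ι_self_left (x y : M) : ι R x * (ι R x * ι R y) = 0 := by
  rw [← mul_assoc, ι_sq_zero, zero_mul]

theorem ι_mul_ι_mul_ι_self_right (x y : M) : ι R y * (ι R x * ι R y) = 0 := by
  rw [← mul_assoc, ι_mul_ι_anticomm_s16, neg_mul, mul_assoc, ι_sq_zero, mul_zero, neg_zero]

theorem ι_mul_ι_mul_ι_comm (x y z : M) : ι R x * ι R y * ι R z = ι R z * (ι R x * ι R y) := by
  rw [mul_assoc, ι_mul_ι_anticomm_s16 y z, mul_neg, ← mul_assoc, ι_mul_ι_anticomm_s16 x z, neg_mul,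
    neg_neg, mul_assoc]

theorem ι_mul_ι_mul_ι_mul_ι_comm (w x y z : M) :
    ι R w * ι R x * (ι R y * ι R z) = ι R y * ι R z * (ι R w * ι R x) := by
  rw [← mul_assoc, ι_mul_ι_mul_ι_comm, mul_assoc, ι_mul_ι_mul_ι_comm, ← mul_assoc]

theorem ι_mul_ι_mul_ι_mul_ι_eq_ιMulti (w x y z : M) :
    ι R w * ι R x * (ι R y * ι R z) = ιMulti R 4 ![w, x, y, z] := by
  simp [ιMulti_apply, mul_assoc]

theorem ιMulti_ne_zero_of_det_ne_zero [Nontrivial R] {k : ℕ} (v : Fin k → M)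
    (f : Fin k → Module.Dual R M) (h : (Matrix.of fun i j => f j (v i)).det ≠ 0) :
    ιMulti R k v ≠ 0 := by
  intro hv
  apply h
  have hv' : exteriorPower.ιMulti R k v = 0 := Subtype.ext hv
  rw [← exteriorPower.pairingDual_ιMulti_ιMulti, hv', map_zero]

end ExteriorAlgebra

theorem ιMulti_proj_ne_zero {R : Type*} [CommRing R] [Nontrivial R] {k n : ℕ} {a : Fin k → Fin n}
    (ha : Function.Injective a) :
    ιMulti R k (fun j => (LinearMap.proj (a j) : (Fin n → R) →ₗ[R] R)) ≠ 0 := by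
  refine ιMulti_ne_zero_of_det_ne_zero _ (fun j => Module.Dual.eval R _ (Pi.single (a j) 1)) ?_
  have hid : (Matrix.of fun i j => Module.Dual.eval R _ (Pi.single (a j) 1)
      (LinearMap.proj (a i) : (Fin n → R) →ₗ[R] R)) = 1 := by
    ext i j
    simp [Pi.single_apply, ha.eq_iff, Matrix.one_apply]
  rw [hid, Matrix.det_one]
  exact one_ne_zero

theorem dx_mul_dx_mul_dx_mul_dx_eq_zero_iff {n : ℕ} (a b c d : Fin n) :
    dx a * dx b * (dx c * dx d) = 0 ↔ ¬ Function.Injective ![a, b, c, d] := by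
  have h : dx a * dx b * (dx c * dx d)
      = ιMulti ℝ 4 (fun j => LinearMap.proj (![a, b, c, d] j)) := by
    rw [dx, dx, dx, dx, ι_mul_ι_mul_ι_mul_ι_eq_ιMulti]
    congr 1
    ext j : 1
    fin_cases j <;> rfl
  rw [h]
  constructor
  · exact fun h0 hinj => ιMulti_proj_ne_zero hinj h0
  · exact fun hninj => (ιMulti ℝ 4).map_eq_zero_of_not_injective _
      fun hinj => hninj fun i j hij => hinj (by simp only [hij])

section extDeriv'

variable {n : ℕ} {x : Fin n → ℝ}

theorem extDeriv'_add {ω η : (Fin n → ℝ) → FormAlgebra n} (hω : DifferentiableAt ℝ ω x)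
    (hη : DifferentiableAt ℝ η x) :
    extDeriv' (fun v => ω v + η v) x = extDeriv' ω x + extDeriv' η x := by
  rw [extDeriv', extDeriv', extDeriv', fderiv_fun_add hω hη]
  simp only [add_apply, mul_add, Finset.sum_add_distrib]

theorem extDeriv'_add_const (ω : (Fin n → ℝ) → FormAlgebra n) (c : FormAlgebra n) :
    extDeriv' (fun v => ω v + c) x = extDeriv' ω x := by
  simp only [extDeriv', fderiv_add_const]

theorem extDeriv'_smul_const {f : (Fin n → ℝ) → ℝ} (hf : DifferentiableAt ℝ f x)
    (c : FormAlgebra n) :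
    extDeriv' (fun v => f v • c) x = ι ℝ (fderiv ℝ f x : Module.Dual ℝ (Fin n → ℝ)) * c := by
  have hdual : (fderiv ℝ f x : Module.Dual ℝ (Fin n → ℝ))
      = ∑ i, fderiv ℝ f x (Pi.single i 1) • LinearMap.proj i := by
    ext v
    simp [Pi.single_apply]
  simp only [extDeriv', fderiv_smul_const hf, ContinuousLinearMap.smulRight_apply, mul_smul_comm,
    ← smul_mul_assoc, ← Finset.sum_mul, hdual, map_sum, map_smul, dx]

theorem fderiv_coord (i : Fin n) :
    fderiv ℝ (fun v : Fin n → ℝ => v i) x = ContinuousLinearMap.proj i :=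
  (ContinuousLinearMap.proj (R := ℝ) (φ := fun _ : Fin n => ℝ) i).fderiv

end extDeriv'

theorem β₀_apply (x : Fin 4 → ℝ) : β₀ x = x 0 • dx 2 + x 1 • dx 3 := rfl

theorem ω₀_apply (x : Fin 4 → ℝ) :
    ω₀ x = Real.exp (x 0 * x 2 + x 1 * x 3) • (dx 0 * dx 1) + dx 2 * dx 3 := rfl

theorem extDeriv'_β₀ (x : Fin 4 → ℝ) : extDeriv' β₀ x = dx 0 * dx 2 + dx 1 * dx 3 := by
  unfold β₀
  rw [extDeriv'_add (by fun_prop) (by fun_prop), extDeriv'_smul_const (by fun_prop),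
    extDeriv'_smul_const (by fun_prop), fderiv_coord, fderiv_coord]
  rfl

theorem extDeriv'_ω₀ (x : Fin 4 → ℝ) : extDeriv' ω₀ x = β₀ x * ω₀ x := by
  unfold ω₀
  rw [extDeriv'_add_const, extDeriv'_smul_const (by fun_prop), fderiv_exp (by fun_prop),
    fderiv_fun_add (by fun_prop) (by fun_prop), fderiv_fun_mul (by fun_prop) (by fun_prop),
    fderiv_fun_mul (by fun_prop) (by fun_prop)]
  simp only [fderiv_coord, ContinuousLinearMap.toLinearMap_smul,
    ContinuousLinearMap.toLinearMap_add, ContinuousLinearMap.coe_proj, map_smul, map_add]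
  rw [β₀_apply]
  simp only [dx, add_mul, mul_add, smul_mul_assoc, mul_smul_comm, ι_mul_ι_mul_ι_self_left,
    ι_mul_ι_mul_ι_self_right, smul_zero, add_zero]

theorem dx_mul_dx_add_dx_mul_dx_ne_zero :
    dx 0 * dx 2 + dx 1 * dx 3 ≠ (0 : FormAlgebra 4) := by
  intro h
  have hvol := congrArg (· * (dx 1 * dx 3)) h
  simp (disch := decide) only [add_mul, zero_mul,
    (dx_mul_dx_mul_dx_mul_dx_eq_zero_iff _ _ _ _).2, add_zero] at hvol
  exact (dx_mul_dx_mul_dx_mul_dx_eq_zero_iff (n := 4) 0 2 1 3).1 hvol (by decide)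

theorem extDeriv'_β₀_mul_ω₀ (x : Fin 4 → ℝ) : extDeriv' β₀ x * ω₀ x = 0 := by
  rw [extDeriv'_β₀, ω₀_apply]
  simp (disch := decide) only [add_mul, mul_add, mul_smul_comm,
    (dx_mul_dx_mul_dx_mul_dx_eq_zero_iff _ _ _ _).2, smul_zero, add_zero]

theorem ω₀_mul_ω₀ (x : Fin 4 → ℝ) :
    ω₀ x * ω₀ x = (2 * Real.exp (x 0 * x 2 + x 1 * x 3)) • (dx 0 * dx 1 * (dx 2 * dx 3)) := by
  rw [ω₀_apply]
  have hcomm : dx 2 * dx 3 * (dx 0 * dx 1) = (dx 0 * dx 1 * (dx 2 * dx 3) : FormAlgebra 4) :=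
    ι_mul_ι_mul_ι_mul_ι_comm _ _ _ _
  simp (disch := decide) only [add_mul, mul_add, mul_smul_comm, smul_mul_assoc, hcomm,
    (dx_mul_dx_mul_dx_mul_dx_eq_zero_iff _ _ _ _).2, smul_zero, add_zero, zero_add]
  module

theorem statement16 :
    (∀ x : Fin 4 → ℝ, extDeriv' ω₀ x = β₀ x * ω₀ x) ∧
    (∀ x : Fin 4 → ℝ, extDeriv' β₀ x = dx 0 * dx 2 + dx 1 * dx 3) ∧
    (∀ x : Fin 4 → ℝ, extDeriv' β₀ x ≠ 0) ∧
    (∀ x : Fin 4 → ℝ, extDeriv' β₀ x * ω₀ x = 0) ∧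
    (∀ x : Fin 4 → ℝ, ω₀ x * ω₀ x ≠ 0) := by
  refine ⟨extDeriv'_ω₀, extDeriv'_β₀, fun x => ?_, extDeriv'_β₀_mul_ω₀, fun x => ?_⟩
  · rw [extDeriv'_β₀]
    exact dx_mul_dx_add_dx_mul_dx_ne_zero
  · rw [ω₀_mul_ω₀]
    exact smul_ne_zero (by positivity)
      ((dx_mul_dx_mul_dx_mul_dx_eq_zero_iff (n := 4) 0 1 2 3).not_left.2 (by decide))
end

section
/- On M = (0, ∞) × ℝ⁴ with coordinates (t, x¹, x², y¹, y²), define η = dt, Φ = t · (e^{x¹y¹ + x²y²} dx¹ ∧ dx² + dy¹ ∧ dy²), and γ = d(ln t) + x¹ dy¹ + x² dy². Then: (i) dη = 0; (ii) η ∧ Φ ∧ Φ is nowhere zero on M (a volume form); (iii) dΦ = γ ∧ Φ; and (iv) γ is a contact form on M, i.e. γ ∧ dγ ∧ dγ is nowhere zero. -/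
set_option synthInstance.maxHeartbeats 1000000
set_option maxHeartbeats 1000000

noncomputable section

open ExteriorAlgebra

/-- The exterior derivative of a form-valued map on `ℝⁿ`, via the classical coordinate
formula `dω = ∑ᵢ dxⁱ ∧ ∂ᵢω` (where `∂ᵢ` is the partial derivative in the direction of the
`i`-th standard basis vector). -/
def coordExtDeriv {n : ℕ} (ω : (Fin n → ℝ) → FormAlgebra n) (x : Fin n → ℝ) : FormAlgebra n :=
  ∑ i : Fin n, dx i * fderiv ℝ ω x (Pi.single i 1)

end

/-- `M = (0, ∞) × ℝ⁴ ⊆ ℝ⁵`, with coordinates `(t, x¹, x², y¹, y²) = (v 0, …, v 4)`. -/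
def Mset : Set (Fin 5 → ℝ) := {v | 0 < v 0}

/-- The 1-form `η = dt` on `M`. -/
noncomputable def ηform : (Fin 5 → ℝ) → FormAlgebra 5 := fun _ => dx 0

/-- The 2-form `Φ = t (e^{x¹y¹ + x²y²} dx¹ ∧ dx² + dy¹ ∧ dy²)` on `M`. -/
noncomputable def Φform : (Fin 5 → ℝ) → FormAlgebra 5 := fun v =>
  v 0 • (Real.exp (v 1 * v 3 + v 2 * v 4) • (dx 1 * dx 2) + dx 3 * dx 4)

/-- The 1-form `γ = d(ln t) + x¹ dy¹ + x² dy² = t⁻¹ dt + x¹ dy¹ + x² dy²` on `M`. -/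
noncomputable def γform : (Fin 5 → ℝ) → FormAlgebra 5 := fun v =>
  (v 0)⁻¹ • dx 0 + v 1 • dx 3 + v 2 • dx 4

/-!
Everything reduces to finite computations in the exterior algebra. The coordinate exterior
derivative is additive and sends `f • α`, with `α` constant, to `df ∧ α`; hence
`dΦ = d(t e^S) ∧ dx¹ ∧ dx² + dt ∧ dy¹ ∧ dy²` with `S = x¹y¹ + x²y²`, and
`dγ = dx¹ ∧ dy¹ + dx² ∧ dy²`. Wedge products of coordinate 1-forms are evaluated by sorting
their factors, with signs. This identifies `η ∧ Φ ∧ Φ` and `γ ∧ dγ ∧ dγ` as the multiples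
`2 t² e^S` and `-2 / t` of `dt ∧ dx¹ ∧ dx² ∧ dy¹ ∧ dy²`, which is a basis vector of the exterior
algebra.
-/

open ExteriorAlgebra

section CoordinateForms

variable {n : ℕ}

theorem dx_mul_self (i : Fin n) : dx i * dx i = 0 := ι_sq_zero _

theorem dx_mul_dx_mul_self (i : Fin n) (a : FormAlgebra n) : dx i * (dx i * a) = 0 := by
  rw [← mul_assoc, dx_mul_self, zero_mul]

theorem dx_mul_dx_comm (i j : Fin n) : dx i * dx j = -(dx j * dx i) :=
  eq_neg_of_add_eq_zero_left (ι_add_mul_swap _ _)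

theorem dx_mul_dx_mul_comm (i j : Fin n) (a : FormAlgebra n) :
    dx i * (dx j * a) = -(dx j * (dx i * a)) := by
  rw [← mul_assoc, dx_mul_dx_comm, neg_mul, mul_assoc]

theorem dx_mul_dx_mul_dx_self (i j : Fin n) : dx i * (dx j * dx i) = 0 := by
  rw [dx_mul_dx_mul_comm, dx_mul_self, mul_zero, neg_zero]

theorem prod_ofFn_dx_ne_zero : (List.ofFn (dx (n := n))).prod ≠ 0 := by
  set b := (Pi.basisFun ℝ (Fin n)).dualBasis
  have hb (i : Fin n) : b i = LinearMap.proj i := by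
    ext
    simp [b]
  have hs (h : (Finset.univ : Finset (Fin n)).card = n) (i : Fin n) :
      Set.powersetCard.ofFinEmbEquiv.symm (Set.powersetCard.ofCard h) i = i := by
    simp [Set.powersetCard.ofFinEmbEquiv_symm_apply, Set.powersetCard.ofCard,
      ← Finset.orderEmbOfFin_unique h (f := id) (by simp) strictMono_id]
  have h := b.ExteriorAlgebra.ne_zero Finset.univ
  rw [ExteriorAlgebra.basis_apply_ofCard b (n := n) (by simp)] at h
  simp only [ExteriorAlgebra.ιMulti_family, ιMulti_apply, Function.comp_apply, hs, hb] at h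
  exact h

theorem ι_proj (i : Fin n) :
    ι ℝ ((ContinuousLinearMap.proj i : (Fin n → ℝ) →L[ℝ] ℝ) : Module.Dual ℝ (Fin n → ℝ)) = dx i :=
  rfl

theorem coordExtDeriv_const (α : FormAlgebra n) (x : Fin n → ℝ) :
    coordExtDeriv (fun _ => α) x = 0 := by
  simp [coordExtDeriv]

theorem coordExtDeriv_add {ω θ : (Fin n → ℝ) → FormAlgebra n} {x : Fin n → ℝ}
    (hω : DifferentiableAt ℝ ω x) (hθ : DifferentiableAt ℝ θ x) :
    coordExtDeriv (fun y => ω y + θ y) x = coordExtDeriv ω x + coordExtDeriv θ x := by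
  simp [coordExtDeriv, fderiv_fun_add hω hθ, mul_add, Finset.sum_add_distrib]

theorem coordExtDeriv_smul_const {f : (Fin n → ℝ) → ℝ} {f' : (Fin n → ℝ) →L[ℝ] ℝ}
    {x : Fin n → ℝ} (hf : HasFDerivAt f f' x) (α : FormAlgebra n) :
    coordExtDeriv (fun y => f y • α) x = ι ℝ (f' : Module.Dual ℝ (Fin n → ℝ)) * α := by
  have hf' : (f' : Module.Dual ℝ (Fin n → ℝ)) = ∑ i, f' (Pi.single i 1) • LinearMap.proj i := by
    ext
    simp [Pi.single_apply]
  simp [coordExtDeriv, (hf.smul_const α).fderiv, hf', Finset.sum_mul, dx]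

end CoordinateForms

theorem Φform_eq : Φform = fun v =>
    (v 0 * Real.exp (v 1 * v 3 + v 2 * v 4)) • (dx 1 * dx 2) + v 0 • (dx 3 * dx 4) := by
  funext v
  simp only [Φform, smul_add, smul_smul]

theorem coordExtDeriv_Φform (v : Fin 5 → ℝ) :
    coordExtDeriv Φform v =
      (Real.exp (v 1 * v 3 + v 2 * v 4) • dx 0 +
          (v 0 * Real.exp (v 1 * v 3 + v 2 * v 4)) • (v 1 • dx 3 + v 2 • dx 4)) * (dx 1 * dx 2) +
        dx 0 * (dx 3 * dx 4) := by
  have ht := hasFDerivAt_apply (𝕜 := ℝ) 0 v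
  have hf : HasFDerivAt (fun y : Fin 5 → ℝ => y 0 * Real.exp (y 1 * y 3 + y 2 * y 4)) _ v :=
    ht.fun_mul (((hasFDerivAt_apply 1 v).fun_mul (hasFDerivAt_apply 3 v)).fun_add
      ((hasFDerivAt_apply 2 v).fun_mul (hasFDerivAt_apply 4 v))).exp
  rw [Φform_eq,
    coordExtDeriv_add (hf.differentiableAt.smul_const _) (ht.differentiableAt.smul_const _),
    coordExtDeriv_smul_const hf, coordExtDeriv_smul_const ht]
  simp only [ContinuousLinearMap.toLinearMap_add, ContinuousLinearMap.toLinearMap_smul, map_add,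
    map_smul, ι_proj, add_mul, smul_mul_assoc, dx_mul_dx_mul_self, dx_mul_dx_mul_dx_self,
    smul_zero, add_zero]
  module

theorem coordExtDeriv_γform {v : Fin 5 → ℝ} (hv : v 0 ≠ 0) :
    coordExtDeriv γform v = dx 1 * dx 3 + dx 2 * dx 4 := by
  have hinv : HasFDerivAt (fun y : Fin 5 → ℝ => (y 0)⁻¹)
      (-(v 0 ^ 2)⁻¹ • (ContinuousLinearMap.proj 0 : (Fin 5 → ℝ) →L[ℝ] ℝ)) v := by
    simpa [Function.comp_def] using (hasDerivAt_inv hv).comp_hasFDerivAt v (hasFDerivAt_apply 0 v)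
  have hx₁ := hasFDerivAt_apply (𝕜 := ℝ) 1 v
  have hx₂ := hasFDerivAt_apply (𝕜 := ℝ) 2 v
  unfold γform
  rw [coordExtDeriv_add ((hinv.differentiableAt.smul_const _).fun_add
      (hx₁.differentiableAt.smul_const _)) (hx₂.differentiableAt.smul_const _),
    coordExtDeriv_add (hinv.differentiableAt.smul_const _) (hx₁.differentiableAt.smul_const _),
    coordExtDeriv_smul_const hinv, coordExtDeriv_smul_const hx₁, coordExtDeriv_smul_const hx₂]
  simp only [ContinuousLinearMap.toLinearMap_smul, map_smul, ι_proj, smul_mul_assoc, dx_mul_self,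
    smul_zero, zero_add]

-- The guard `i < j` lets `simp` sort every monomial, so that repeated factors meet and vanish.
theorem ηform_mul_Φform_mul_Φform (v : Fin 5 → ℝ) :
    ηform v * Φform v * Φform v =
      (2 * v 0 ^ 2 * Real.exp (v 1 * v 3 + v 2 * v 4)) •
        (dx 0 * (dx 1 * (dx 2 * (dx 3 * dx 4)))) := by
  simp only [ηform, Φform, mul_add, add_mul, smul_mul_assoc, mul_smul_comm, mul_assoc, mul_neg,
    smul_neg, dx_mul_self, fun (i j : Fin 5) (_ : i < j) => dx_mul_dx_comm j i,
    fun (i j : Fin 5) (_ : i < j) (a : FormAlgebra 5) => dx_mul_dx_mul_comm j i a,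
    Fin.reduceLT, mul_zero, neg_zero, smul_zero, add_zero, zero_add]
  module

theorem γform_mul_coordExtDeriv_γform_sq {v : Fin 5 → ℝ} (hv : v 0 ≠ 0) :
    γform v * coordExtDeriv γform v * coordExtDeriv γform v =
      (-(2 * (v 0)⁻¹)) • (dx 0 * (dx 1 * (dx 2 * (dx 3 * dx 4)))) := by
  simp only [coordExtDeriv_γform hv, γform, mul_add, add_mul, smul_mul_assoc, mul_assoc, neg_mul,
    mul_neg, smul_neg, dx_mul_self, dx_mul_dx_mul_self,
    fun (i j : Fin 5) (_ : i < j) => dx_mul_dx_comm j i,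
    fun (i j : Fin 5) (_ : i < j) (a : FormAlgebra 5) => dx_mul_dx_mul_comm j i a,
    Fin.reduceLT, mul_zero, neg_zero, smul_zero, add_zero, zero_add]
  module

theorem coordExtDeriv_Φform_eq_γform_mul_Φform {v : Fin 5 → ℝ} (hv : v 0 ≠ 0) :
    coordExtDeriv Φform v = γform v * Φform v := by
  rw [coordExtDeriv_Φform]
  simp only [γform, Φform, add_mul, mul_add, smul_mul_assoc, mul_smul_comm, dx_mul_dx_mul_self,
    dx_mul_dx_mul_dx_self, smul_zero, add_zero]
  match_scalars <;> field_simp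

theorem statement17 :
    (∀ v ∈ Mset, coordExtDeriv ηform v = 0) ∧
    (∀ v ∈ Mset, ηform v * Φform v * Φform v ≠ 0) ∧
    (∀ v ∈ Mset, coordExtDeriv Φform v = γform v * Φform v) ∧
    (∀ v ∈ Mset, γform v * coordExtDeriv γform v * coordExtDeriv γform v ≠ 0) := by
  have htop : dx 0 * (dx 1 * (dx 2 * (dx 3 * dx 4))) ≠ (0 : FormAlgebra 5) := by
    simpa [List.ofFn_succ] using prod_ofFn_dx_ne_zero (n := 5)
  refine ⟨fun v _ => coordExtDeriv_const _ v, fun v (hv : 0 < v 0) => ?_,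
    fun v (hv : 0 < v 0) => coordExtDeriv_Φform_eq_γform_mul_Φform hv.ne', fun v (hv : 0 < v 0) => ?_⟩
  · rw [ηform_mul_Φform_mul_Φform]
    exact smul_ne_zero (by positivity) htop
  · rw [γform_mul_coordExtDeriv_γform_sq hv.ne']
    exact smul_ne_zero (by simpa using hv.ne') htop
end
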